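/- arXiv:math/0508369 — 6 statements merged into one kernel-verified Lean document; each statement's English description precedes it below -/
import Mathlib

section
/- The set of quasi-uniform probability measures on [0,1] is closed with respect to the topology of weak convergence of probability measures. -/
/-! If `x` violates `μ[0,x) ≤ x ≤ μ[0,x]`, the violation is strict: `μ[0,x] < x` or `x < μ[0,x)`.
By right- (resp. left-) continuity of `t ↦ μ[0,t]` and the portmanteau theorem, the same strict
inequality holds at every point of an open interval around `x`, simultaneously for all `ν` weakly
close to `μ`. That interval is then null for every quasi-uniform `ν` near `μ`, and hence, again by
portmanteau, for any weak limit `μ` of such measures. So the bad points of a limit are covered by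
`μ`-null open sets, and their union is `μ`-null by second countability. -/

open MeasureTheory Filter Topology Set unitInterval
open scoped ENNReal

/-- A probability measure `μ` on `[0,1]` is quasi-uniform if
`μ {x ∈ [0,1] : μ[0,x) ≤ x ≤ μ[0,x]} = 1`. -/
def QuasiUniform (μ : ProbabilityMeasure (Set.Icc (0:ℝ) 1)) : Prop :=
  (μ : Measure (Set.Icc (0:ℝ) 1))
      {x : Set.Icc (0:ℝ) 1 |
        (μ : Measure (Set.Icc (0:ℝ) 1)) {y : Set.Icc (0:ℝ) 1 | (y : ℝ) < (x : ℝ)}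
            ≤ ENNReal.ofReal (x : ℝ) ∧
          ENNReal.ofReal (x : ℝ)
            ≤ (μ : Measure (Set.Icc (0:ℝ) 1)) {y : Set.Icc (0:ℝ) 1 | (y : ℝ) ≤ (x : ℝ)}} = 1

namespace MeasureTheory

section Continuity

variable {α : Type*} [MeasurableSpace α] {μ : Measure α} {f : α → ℝ}

lemma exists_gt_measure_le_lt [IsFiniteMeasure μ] (hf : Measurable f) {x : ℝ} {r : ℝ≥0∞}
    (h : μ {a | f a ≤ x} < r) : ∃ x' > x, μ {a | f a ≤ x'} < r := by
  have hinter : ⋂ t > x, {a | f a ≤ t} = {a | f a ≤ x} := by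
    ext a
    simp only [mem_iInter, mem_ofPred_eq]
    exact ⟨fun ha => le_of_forall_gt_imp_ge_of_dense ha, fun ha t ht => ha.trans ht.le⟩
  have hlim : Tendsto (fun t => μ {a | f a ≤ t}) (𝓝[>] x) (𝓝 (μ {a | f a ≤ x})) := by
    rw [← hinter]
    exact tendsto_measure_biInter_gt
      (fun t _ => (measurableSet_le hf measurable_const).nullMeasurableSet)
      (fun _ _ _ hij _ ha => le_trans ha hij) ⟨x + 1, by simp, measure_ne_top _ _⟩
  obtain ⟨x', hlt, hx'⟩ := ((hlim.eventually (gt_mem_nhds h)).and self_mem_nhdsWithin).exists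
  exact ⟨x', hx', hlt⟩

lemma exists_lt_lt_measure_lt {x : ℝ} {r : ℝ≥0∞} (h : r < μ {a | f a < x}) :
    ∃ x' < x, r < μ {a | f a < x'} := by
  have hunion : ⋃ t : Iio x, {a | f a < t} = {a | f a < x} := by
    ext a
    simp only [mem_iUnion, mem_ofPred_eq, Subtype.exists, mem_Iio, exists_prop]
    exact ⟨fun ⟨t, htx, hat⟩ => hat.trans htx,
      fun ha => (exists_between ha).imp fun _ h => h.symm⟩
  have hlim := tendsto_measure_iUnion_atTop (μ := μ)
    (s := fun t : Iio x => {a | f a < t}) fun _ _ hst a (ha : f a < _) => ha.trans_le hst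
  rw [hunion] at hlim
  obtain ⟨t, ht⟩ := (hlim.eventually (lt_mem_nhds h)).exists
  exact ⟨t, t.2, ht⟩

end Continuity

namespace ProbabilityMeasure

variable {Ω : Type*} [MeasurableSpace Ω] [TopologicalSpace Ω] [OpensMeasurableSpace Ω]
  [HasOuterApproxClosed Ω] {μ : ProbabilityMeasure Ω}

lemma eventually_lt_measure_of_isOpen {G : Set Ω} (hG : IsOpen G) {r : ℝ≥0∞}
    (h : r < (μ : Measure Ω) G) : ∀ᶠ ν : ProbabilityMeasure Ω in 𝓝 μ, r < (ν : Measure Ω) G :=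
  eventually_lt_of_lt_liminf (h.trans_le (le_liminf_measure_open_of_tendsto tendsto_id hG))

lemma eventually_measure_lt_of_isClosed {F : Set Ω} (hF : IsClosed F) {r : ℝ≥0∞}
    (h : (μ : Measure Ω) F < r) : ∀ᶠ ν : ProbabilityMeasure Ω in 𝓝 μ, (ν : Measure Ω) F < r :=
  eventually_lt_of_limsup_lt ((limsup_measure_closed_le_of_tendsto tendsto_id hF).trans_lt h)

lemma measure_eq_zero_of_frequently {G : Set Ω} (hG : IsOpen G)
    (h : ∃ᶠ ν : ProbabilityMeasure Ω in 𝓝 μ, (ν : Measure Ω) G = 0) : (μ : Measure Ω) G = 0 := by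
  by_contra hne
  obtain ⟨ν, hν, hνpos⟩ :=
    (h.and_eventually (eventually_lt_measure_of_isOpen hG (pos_iff_ne_zero.2 hne))).exists
  exact hνpos.ne' hν

end ProbabilityMeasure

end MeasureTheory

def quasiUniformSet (μ : Measure I) : Set I :=
  {x | μ {y | (y : ℝ) < x} ≤ ENNReal.ofReal x ∧ ENNReal.ofReal x ≤ μ {y | (y : ℝ) ≤ x}}

section QuasiUniform

variable {μ : ProbabilityMeasure I}

lemma quasiUniform_iff : QuasiUniform μ ↔ (μ : Measure I) (quasiUniformSet μ) = 1 := Iff.rfl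

lemma QuasiUniform.measure_eq_zero_of_disjoint (hμ : QuasiUniform μ) {U : Set I}
    (hU : MeasurableSet U) (hd : Disjoint U (quasiUniformSet μ)) : (μ : Measure I) U = 0 := by
  have h : (μ : Measure I) (quasiUniformSet μ) + (μ : Measure I) U ≤ 1 :=
    measure_union hd.symm hU ▸ prob_le_one
  rw [quasiUniform_iff.1 hμ] at h
  exact nonpos_iff_eq_zero.1 <|
    (ENNReal.add_le_add_iff_left ENNReal.one_ne_top).1 (h.trans_eq (add_zero 1).symm)

lemma quasiUniform_of_locally_null
    (h : ∀ x ∉ quasiUniformSet μ, ∃ U ∈ 𝓝 x, (μ : Measure I) U = 0) : QuasiUniform μ := by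
  have hnull : (μ : Measure I) (quasiUniformSet μ)ᶜ = 0 :=
    measure_null_of_locally_null _ fun x hx =>
      (h x hx).imp fun U hU => ⟨mem_nhdsWithin_of_mem_nhds hU.1, hU.2⟩
  exact quasiUniform_iff.2 ((measure_congr (ae_eq_univ.2 hnull)).trans measure_univ)

lemma exists_isOpen_eventually_disjoint_of_measure_le_lt {x : I}
    (hx : (μ : Measure I) {y | (y : ℝ) ≤ x} < ENNReal.ofReal x) :
    ∃ U : Set I, IsOpen U ∧ x ∈ U ∧
      ∀ᶠ ν : ProbabilityMeasure I in 𝓝 μ, Disjoint U (quasiUniformSet ν) := by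
  obtain ⟨c, -, hμc, hcx⟩ := ENNReal.lt_iff_exists_real_btwn.1 hx
  obtain ⟨x', hxx', hx'⟩ := exists_gt_measure_le_lt continuous_subtype_val.measurable hμc
  refine ⟨{y | c < y ∧ (y : ℝ) < x'}, isOpen_Ioo.preimage continuous_subtype_val,
    ⟨(ENNReal.ofReal_lt_ofReal_iff'.1 hcx).1, hxx'⟩, ?_⟩
  filter_upwards [ProbabilityMeasure.eventually_measure_lt_of_isClosed
    (isClosed_Iic.preimage continuous_subtype_val) hx'] with ν hν
  refine disjoint_left.2 fun y ⟨hcy, hyx'⟩ ⟨_, hy⟩ => lt_irrefl (ENNReal.ofReal y) ?_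
  calc ENNReal.ofReal y ≤ (ν : Measure I) {z | (z : ℝ) ≤ y} := hy
    _ ≤ (ν : Measure I) {z | (z : ℝ) ≤ x'} := measure_mono fun z hz => le_trans hz hyx'.le
    _ < ENNReal.ofReal c := hν
    _ ≤ ENNReal.ofReal y := ENNReal.ofReal_le_ofReal hcy.le

lemma exists_isOpen_eventually_disjoint_of_lt_measure_lt {x : I}
    (hx : ENNReal.ofReal x < (μ : Measure I) {y | (y : ℝ) < x}) :
    ∃ U : Set I, IsOpen U ∧ x ∈ U ∧
      ∀ᶠ ν : ProbabilityMeasure I in 𝓝 μ, Disjoint U (quasiUniformSet ν) := by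
  obtain ⟨w, -, hxw, hwμ⟩ := ENNReal.lt_iff_exists_real_btwn.1 hx
  obtain ⟨x', hx'x, hx'⟩ := exists_lt_lt_measure_lt hwμ
  refine ⟨{y | x' < y ∧ (y : ℝ) < w}, isOpen_Ioo.preimage continuous_subtype_val,
    ⟨hx'x, (ENNReal.ofReal_lt_ofReal_iff'.1 hxw).1⟩, ?_⟩
  filter_upwards [ProbabilityMeasure.eventually_lt_measure_of_isOpen
    (isOpen_Iio.preimage continuous_subtype_val) hx'] with ν hν
  refine disjoint_left.2 fun y ⟨hx'y, hyw⟩ ⟨hy, _⟩ => lt_irrefl (ENNReal.ofReal y) ?_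
  calc ENNReal.ofReal y ≤ ENNReal.ofReal w := ENNReal.ofReal_le_ofReal hyw.le
    _ < (ν : Measure I) {z | (z : ℝ) < x'} := hν
    _ ≤ (ν : Measure I) {z | (z : ℝ) < y} := measure_mono fun z hz => lt_trans hz hx'y
    _ ≤ ENNReal.ofReal y := hy

lemma exists_isOpen_eventually_disjoint_of_notMem {x : I} (hx : x ∉ quasiUniformSet μ) :
    ∃ U : Set I, IsOpen U ∧ x ∈ U ∧
      ∀ᶠ ν : ProbabilityMeasure I in 𝓝 μ, Disjoint U (quasiUniformSet ν) := by
  rcases not_and_or.1 hx with hlt | hle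
  · exact exists_isOpen_eventually_disjoint_of_lt_measure_lt (not_le.1 hlt)
  · exact exists_isOpen_eventually_disjoint_of_measure_le_lt (not_le.1 hle)

end QuasiUniform

/-- The set of quasi-uniform probability measures on `[0,1]` is closed in the topology of
weak convergence of probability measures. -/
theorem quasiUniform_isClosed :
    IsClosed {μ : ProbabilityMeasure (Set.Icc (0:ℝ) 1) | QuasiUniform μ} := by
  refine isClosed_of_closure_subset fun μ hμ => quasiUniform_of_locally_null fun x hx => ?_
  obtain ⟨U, hU, hxU, hdisj⟩ := exists_isOpen_eventually_disjoint_of_notMem hx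
  refine ⟨U, hU.mem_nhds hxU, ProbabilityMeasure.measure_eq_zero_of_frequently hU ?_⟩
  exact ((mem_closure_iff_frequently.1 hμ).and_eventually hdisj).mono fun ν ⟨hν, hd⟩ =>
    hν.measure_eq_zero_of_disjoint hU.measurableSet hd
end

section
/- Let (Z_n)_{n ∈ ℤ} be i.i.d. {0,1}-valued random variables and define a random strict total order ⊲ on ℤ by: m ⊲ n iff (Z_m = Z_n and m < n) or Z_m < Z_n. Then the law of ⊲ is invariant under every strictly increasing map f : ℤ → ℤ, i.e., the order defined by m ⊲̂ n iff f(m) ⊲ f(n) has the same law as ⊲. -/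
open MeasureTheory ProbabilityTheory

/-!
The order `⊲` is the pullback of the lexicographic order on `Bool ×ₗ ℤ` along `n ↦ (Z n, n)`,
hence a strict total order. Precomposing `⊲` with a strictly increasing `f` gives the same
construction applied to the sequence `Z ∘ f`, since `f` preserves the order of positions.
An i.i.d. sequence and its reindexing along an injective map both have the product measure as
joint law, so the two orders have the same law.
-/

/-- A `Bool`-valued relation on `ℤ` is a strict total order. -/
def IsStrictTotalBool (R : ℤ → ℤ → Bool) : Prop :=
  (∀ a, R a a = false) ∧
  (∀ a b c, R a b = true → R b c = true → R a c = true) ∧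
  (∀ a b, a ≠ b → R a b = !R b a)

theorem ProbabilityTheory.iIndepFun.map_precomp_eq {ι β Ω : Type*} [MeasurableSpace Ω]
    [MeasurableSpace β] {P : Measure Ω} {X : ι → Ω → β} (hmeas : ∀ i, Measurable (X i))
    (hindep : iIndepFun X P) (hident : ∀ i j, P.map (X i) = P.map (X j))
    {g : ι → ι} (hg : g.Injective) :
    P.map (fun ω i => X (g i) ω) = P.map (fun ω i => X i ω) := by
  rw [(hindep.precomp hg).map_fun_eq_infinitePi_map (fun i => hmeas (g i)),
    hindep.map_fun_eq_infinitePi_map hmeas]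
  congr 1 with i : 1
  exact hident _ _

def colorLexOrder {α : Type*} [LinearOrder α] (z : ℤ → α) (m n : ℤ) : Bool :=
  decide (toLex (z m, m) < toLex (z n, n))

theorem isStrictTotalBool_of_injective {α : Type*} [LinearOrder α] {g : ℤ → α}
    (hg : g.Injective) : IsStrictTotalBool fun m n => decide (g m < g n) := by
  refine ⟨fun a => by simp, fun a b c hab hbc => ?_, fun a b hab => ?_⟩
  · simp only [decide_eq_true_eq] at *
    exact hab.trans hbc
  · rcases (hg.ne hab).lt_or_gt with h | h <;> simp [h, h.not_gt]

theorem isStrictTotalBool_colorLexOrder {α : Type*} [LinearOrder α] (z : ℤ → α) :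
    IsStrictTotalBool (colorLexOrder z) :=
  isStrictTotalBool_of_injective (g := fun n => toLex (z n, n)) fun _ _ h => congrArg (·.2) h

theorem colorLexOrder_comp_strictMono {α : Type*} [LinearOrder α] (z : ℤ → α) {f : ℤ → ℤ}
    (hf : StrictMono f) (m n : ℤ) :
    colorLexOrder (z ∘ f) m n = colorLexOrder z (f m) (f n) := by
  simp [colorLexOrder, Prod.Lex.toLex_lt_toLex, hf.lt_iff_lt]

theorem measurable_colorLexOrder {α : Type*} [LinearOrder α] [MeasurableSpace α] [Countable α]
    [MeasurableSingletonClass α] : Measurable (colorLexOrder (α := α)) := by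
  refine measurable_pi_lambda _ fun m => measurable_pi_lambda _ fun n => ?_
  have hpair : Measurable fun z : ℤ → α => (z m, z n) :=
    (measurable_pi_apply m).prodMk (measurable_pi_apply n)
  exact (measurable_of_countable fun p : α × α => decide (toLex (p.1, m) < toLex (p.2, n))).comp
    hpair

theorem colorLexOrder_eq_decide {α : Type*} [LinearOrder α] (z : ℤ → α) (m n : ℤ) :
    colorLexOrder z m n = decide ((z m = z n ∧ m < n) ∨ z m < z n) := by
  simp only [colorLexOrder, Prod.Lex.toLex_lt_toLex, or_comm]

theorem iid_two_class_order_I_invariant_general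
    {Ω : Type*} [MeasurableSpace Ω] (P : Measure Ω)
    (Z : ℤ → Ω → Bool) (hmeas : ∀ n, Measurable (Z n))
    (hindep : iIndepFun Z P)
    (hident : ∀ m n : ℤ, P.map (Z m) = P.map (Z n))
    (T : Ω → ℤ → ℤ → Bool)
    (hT : ∀ ω m n, T ω m n = decide ((Z m ω = Z n ω ∧ m < n) ∨ Z m ω < Z n ω)) :
    (∀ ω, IsStrictTotalBool (T ω)) ∧
      ∀ f : ℤ → ℤ, StrictMono f →
        P.map (fun ω => fun m n => T ω (f m) (f n)) = P.map T := by
  have hT' : T = fun ω => colorLexOrder fun i => Z i ω := by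
    funext ω m n
    rw [hT, colorLexOrder_eq_decide]
  subst hT'
  refine ⟨fun ω => isStrictTotalBool_colorLexOrder _, fun f hf => ?_⟩
  have hZf : Measurable fun ω i => Z (f i) ω := measurable_pi_lambda _ fun i => hmeas (f i)
  calc P.map (fun ω m n => colorLexOrder (fun i => Z i ω) (f m) (f n))
      = (P.map fun ω i => Z (f i) ω).map colorLexOrder := by
        rw [Measure.map_map measurable_colorLexOrder hZf]
        simp_rw [← colorLexOrder_comp_strictMono _ hf]
        rfl
    _ = (P.map fun ω i => Z i ω).map colorLexOrder := by
        rw [hindep.map_precomp_eq hmeas hident hf.injective]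
    _ = P.map fun ω => colorLexOrder fun i => Z i ω :=
        Measure.map_map measurable_colorLexOrder (measurable_pi_lambda _ hmeas)

/-- Let `(Z_n)_{n ∈ ℤ}` be i.i.d. `{0,1}`-valued random variables and order `ℤ` by
`m ⊲ n` iff (`Z_m = Z_n` and `m < n`) or `Z_m < Z_n`.  Then `⊲` is a strict total order
and its law is invariant under every strictly increasing `f : ℤ → ℤ`. -/
theorem iid_two_class_order_I_invariant
    {Ω : Type*} [MeasurableSpace Ω] (P : Measure Ω) [IsProbabilityMeasure P]
    (Z : ℤ → Ω → Bool) (hmeas : ∀ n, Measurable (Z n))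
    (hindep : iIndepFun Z P)
    (hident : ∀ m n : ℤ, P.map (Z m) = P.map (Z n))
    (T : Ω → ℤ → ℤ → Bool)
    (hT : ∀ ω m n, T ω m n = decide ((Z m ω = Z n ω ∧ m < n) ∨ Z m ω < Z n ω)) :
    (∀ ω, IsStrictTotalBool (T ω)) ∧
      ∀ f : ℤ → ℤ, StrictMono f →
        P.map (fun ω => fun m n => T ω (f m) (f n)) = P.map T :=
  iid_two_class_order_I_invariant_general P Z hmeas hindep hident T hT
end

section
/- Fix a strict total order ⊲ on ℤ. For n ∈ ℤ define X̄_n = limsup_{N→∞} (1/N) Σ_{k=1}^N 1_{k ⊲ n} and X̲_n = liminf_{N→∞} (1/N) Σ_{k=1}^N 1_{k ⊲ n}. If the empirical measures ν^N given by ν^N[0,x] = (1/N) Σ_{k=1}^N 1_{X̄_k ≤ x} converge weakly to a probability measure ν on [0,1], then ν[0, X̄_1) ≤ X̲_1 ≤ X̄_1 ≤ ν[0, X̄_1]. -/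
open MeasureTheory Filter

/-- `X̄_n`, the limsup relative rank of `n` under the order `R`. -/
noncomputable def Xbar (R : ℤ → ℤ → Bool) (n : ℤ) : ℝ :=
  limsup (fun N : ℕ => (N : ℝ)⁻¹ * ∑ k ∈ Finset.Icc (1:ℤ) (N:ℤ), if R k n then (1:ℝ) else 0)
    atTop

/-- `X̲_n`, the liminf relative rank of `n` under the order `R`. -/
noncomputable def Xlow (R : ℤ → ℤ → Bool) (n : ℤ) : ℝ :=
  liminf (fun N : ℕ => (N : ℝ)⁻¹ * ∑ k ∈ Finset.Icc (1:ℤ) (N:ℤ), if R k n then (1:ℝ) else 0)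
    atTop

/-!
`X̄` is monotone along `⊲`: `k ⊲ n` gives `X̄_k ≤ X̄_n`, and otherwise `X̄_n ≤ X̄_k`.
So for `y < X̄_n` an Urysohn function `g` with `1_{(-∞, y]} ≤ g ≤ 1_{(-∞, X̄_n)}` satisfies
`g (X̄_k) ≤ 1_{k ⊲ n}`; averaging over `k ≤ N` and taking the liminf gives
`ν (-∞, y] ≤ ∫ g dν ≤ X̲_n`, and `y ↑ X̄_n` gives `ν (-∞, X̄_n) ≤ X̲_n`. Dually, for `z > X̄_n`,
a `g` with `1_{(-∞, X̄_n]} ≤ g ≤ 1_{(-∞, z)}` gives `X̄_n ≤ ν (-∞, z]`, and `z ↓ X̄_n` uses the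
right-continuity of the distribution function of `ν`.
-/

open Set Topology ProbabilityTheory BoundedContinuousFunction Function

noncomputable def cesaroAvg (f : ℤ → ℝ) (N : ℕ) : ℝ :=
  (N : ℝ)⁻¹ * ∑ k ∈ Finset.Icc (1 : ℤ) (N : ℤ), f k

section CesaroAvg

variable {f g : ℤ → ℝ}

lemma cesaroAvg_mono (h : ∀ k, f k ≤ g k) (N : ℕ) : cesaroAvg f N ≤ cesaroAvg g N :=
  mul_le_mul_of_nonneg_left (Finset.sum_le_sum fun k _ => h k) (by positivity)

lemma cesaroAvg_nonneg (h : ∀ k, 0 ≤ f k) (N : ℕ) : 0 ≤ cesaroAvg f N :=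
  mul_nonneg (by positivity) (Finset.sum_nonneg fun k _ => h k)

lemma cesaroAvg_one_le (N : ℕ) : cesaroAvg 1 N ≤ 1 := by
  simpa [cesaroAvg] using inv_mul_le_one (a := (N : ℝ))

lemma cesaroAvg_le_one (h : ∀ k, f k ≤ 1) (N : ℕ) : cesaroAvg f N ≤ 1 :=
  (cesaroAvg_mono h N).trans (cesaroAvg_one_le N)

lemma limsup_cesaroAvg_mono (hf : ∀ k, 0 ≤ f k) (hfg : ∀ k, f k ≤ g k) (hg : ∀ k, g k ≤ 1) :
    limsup (cesaroAvg f) atTop ≤ limsup (cesaroAvg g) atTop :=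
  limsup_le_limsup (.of_forall (cesaroAvg_mono hfg))
    (isBoundedUnder_of ⟨0, cesaroAvg_nonneg hf⟩).isCoboundedUnder_le
    (isBoundedUnder_of ⟨1, cesaroAvg_le_one hg⟩)

lemma liminf_cesaroAvg_mono (hf : ∀ k, 0 ≤ f k) (hfg : ∀ k, f k ≤ g k) (hg : ∀ k, g k ≤ 1) :
    liminf (cesaroAvg f) atTop ≤ liminf (cesaroAvg g) atTop :=
  liminf_le_liminf (.of_forall (cesaroAvg_mono hfg))
    (isBoundedUnder_of ⟨0, cesaroAvg_nonneg hf⟩)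
    (isBoundedUnder_of ⟨1, cesaroAvg_le_one hg⟩).isCoboundedUnder_ge

lemma liminf_cesaroAvg_le_limsup (hf₀ : ∀ k, 0 ≤ f k) (hf₁ : ∀ k, f k ≤ 1) :
    liminf (cesaroAvg f) atTop ≤ limsup (cesaroAvg f) atTop :=
  liminf_le_limsup (isBoundedUnder_of ⟨1, cesaroAvg_le_one hf₁⟩)
    (isBoundedUnder_of ⟨0, cesaroAvg_nonneg hf₀⟩)

end CesaroAvg

section Measure

variable {X : Type*} [TopologicalSpace X] [MeasurableSpace X] [OpensMeasurableSpace X]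
  {μ : Measure X} [IsFiniteMeasure μ] {s : Set X} {g : X →ᵇ ℝ}

lemma measureReal_le_integral_of_eqOn_one (hs : MeasurableSet s) (hg₁ : EqOn g 1 s)
    (hg₀ : ∀ t, 0 ≤ g t) : μ.real s ≤ ∫ t, g t ∂μ := by
  rw [← integral_indicator_one hs]
  refine integral_mono ((integrable_const 1).indicator hs) (g.integrable μ) fun t => ?_
  by_cases ht : t ∈ s
  · simp [ht, hg₁ ht]
  · simp [ht, hg₀ t]

lemma integral_le_measureReal_of_eqOn_zero (hs : MeasurableSet s) (hg₀ : EqOn g 0 sᶜ)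
    (hg₁ : ∀ t, g t ≤ 1) : ∫ t, g t ∂μ ≤ μ.real s := by
  rw [← integral_indicator_one hs]
  refine integral_mono (g.integrable μ) ((integrable_const 1).indicator hs) fun t => ?_
  by_cases ht : t ∈ s
  · simp [ht, hg₁ t]
  · simp [ht, hg₀ ht]

end Measure

section CDF

variable {μ : Measure ℝ} [IsProbabilityMeasure μ] {x c : ℝ}

lemma measureReal_Iio_le_of_forall_lt (h : ∀ y < x, μ.real (Iic y) ≤ c) :
    μ.real (Iio x) ≤ c := by
  have hIio : μ (Iio x) = ENNReal.ofReal (leftLim (cdf μ) x) := by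
    simpa [measure_cdf] using (cdf μ).measure_Iio (tendsto_cdf_atBot μ) x
  have hlim : Tendsto (cdf μ) (𝓝[<] x) (𝓝 (μ.real (Iio x))) := by
    rw [measureReal_def, hIio, ENNReal.toReal_ofReal]
    · exact (monotone_cdf μ).tendsto_leftLim x
    · exact (cdf_nonneg μ (x - 1)).trans ((monotone_cdf μ).le_leftLim (sub_one_lt x))
  exact le_of_tendsto hlim (eventually_nhdsWithin_of_forall fun y hy =>
    (cdf_eq_real μ y).trans_le (h y hy))

lemma le_measureReal_Iic_of_forall_gt (h : ∀ z > x, c ≤ μ.real (Iic z)) :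
    c ≤ μ.real (Iic x) := by
  rw [← cdf_eq_real]
  exact ge_of_tendsto (((cdf μ).right_continuous x).mono Ioi_subset_Ici_self)
    (eventually_nhdsWithin_of_forall fun z hz => (h z hz).trans_eq (cdf_eq_real μ z).symm)

end CDF

def rankIndicator (R : ℤ → ℤ → Bool) (n k : ℤ) : ℝ := if R k n then 1 else 0

section Rank

variable {R : ℤ → ℤ → Bool}

lemma rankIndicator_nonneg (n k : ℤ) : 0 ≤ rankIndicator R n k := by
  unfold rankIndicator; split_ifs <;> norm_num

lemma rankIndicator_le_one (n k : ℤ) : rankIndicator R n k ≤ 1 := by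
  unfold rankIndicator; split_ifs <;> norm_num

lemma Xlow_le_Xbar (n : ℤ) : Xlow R n ≤ Xbar R n :=
  liminf_cesaroAvg_le_limsup (rankIndicator_nonneg n) (rankIndicator_le_one n)

lemma Xbar_mono {a b : ℤ} (h : ∀ j, R j a → R j b) : Xbar R a ≤ Xbar R b := by
  refine limsup_cesaroAvg_mono (rankIndicator_nonneg a) (fun k => ?_) (rankIndicator_le_one b)
  split_ifs with ha hb
  exacts [le_rfl, absurd (h k ha) hb, zero_le_one, le_rfl]

namespace IsStrictTotalBool

lemma Xbar_le_of_lt (hR : IsStrictTotalBool R) {a b : ℤ} (h : R a b) : Xbar R a ≤ Xbar R b :=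
  Xbar_mono fun j hj => hR.2.1 j a b hj h

lemma Xbar_le_of_not_lt (hR : IsStrictTotalBool R) {a b : ℤ} (h : R a b = false) : Xbar R b ≤ Xbar R a := by
  rcases eq_or_ne a b with rfl | hab
  · rfl
  · exact hR.Xbar_le_of_lt (by simpa [h] using hR.2.2 a b hab)

end IsStrictTotalBool

end Rank

def XbarEmpiricalTendsto (R : ℤ → ℤ → Bool) (ν : Measure ℝ) : Prop :=
  ∀ g : ℝ →ᵇ ℝ, Tendsto (cesaroAvg fun k => g (Xbar R k)) atTop (𝓝 (∫ t, g t ∂ν))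

namespace IsStrictTotalBool

variable {R : ℤ → ℤ → Bool} {ν : Measure ℝ} {n : ℤ}

lemma measureReal_Iic_le_Xlow (hR : IsStrictTotalBool R) (hν : XbarEmpiricalTendsto R ν)
    [IsFiniteMeasure ν] {y : ℝ} (hy : y < Xbar R n) : ν.real (Iic y) ≤ Xlow R n := by
  obtain ⟨g, hg₀, hg₁, hg⟩ := exists_bounded_zero_one_of_closed isClosed_Ici isClosed_Iic
    (Iic_disjoint_Ici.2 hy.not_ge).symm
  have hg_le : ∀ k, g (Xbar R k) ≤ rankIndicator R n k := by
    intro k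
    cases hk : R k n
    · simp [rankIndicator, hk, hg₀ (hR.Xbar_le_of_not_lt hk)]
    · simpa [rankIndicator, hk] using (hg _).2
  calc ν.real (Iic y) ≤ ∫ t, g t ∂ν :=
        measureReal_le_integral_of_eqOn_one measurableSet_Iic hg₁ fun t => (hg t).1
    _ = liminf (cesaroAvg fun k => g (Xbar R k)) atTop := (hν g).liminf_eq.symm
    _ ≤ Xlow R n :=
        liminf_cesaroAvg_mono (fun k => (hg _).1) hg_le (rankIndicator_le_one n)

lemma Xbar_le_measureReal_Iic (hR : IsStrictTotalBool R) (hν : XbarEmpiricalTendsto R ν)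
    [IsFiniteMeasure ν] {z : ℝ} (hz : Xbar R n < z) : Xbar R n ≤ ν.real (Iic z) := by
  obtain ⟨g, hg₀, hg₁, hg⟩ := exists_bounded_zero_one_of_closed isClosed_Ici isClosed_Iic
    (Iic_disjoint_Ici.2 hz.not_ge).symm
  have hle_g : ∀ k, rankIndicator R n k ≤ g (Xbar R k) := by
    intro k
    cases hk : R k n
    · simpa [rankIndicator, hk] using (hg _).1
    · simp [rankIndicator, hk, hg₁ (hR.Xbar_le_of_lt hk)]
  calc Xbar R n ≤ limsup (cesaroAvg fun k => g (Xbar R k)) atTop :=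
        limsup_cesaroAvg_mono (rankIndicator_nonneg n) hle_g fun k => (hg _).2
    _ = ∫ t, g t ∂ν := (hν g).limsup_eq
    _ ≤ ν.real (Iic z) := integral_le_measureReal_of_eqOn_zero measurableSet_Iic
        (hg₀.mono (by rw [compl_Iic]; exact Ioi_subset_Ici_self)) fun t => (hg t).2

lemma measureReal_Iio_Xbar_le_Xlow (hR : IsStrictTotalBool R) (hν : XbarEmpiricalTendsto R ν)
    [IsProbabilityMeasure ν] (n : ℤ) : ν.real (Iio (Xbar R n)) ≤ Xlow R n :=
  measureReal_Iio_le_of_forall_lt fun _ hy => hR.measureReal_Iic_le_Xlow hν hy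

lemma Xbar_le_measureReal_Iic_Xbar (hR : IsStrictTotalBool R) (hν : XbarEmpiricalTendsto R ν)
    [IsProbabilityMeasure ν] (n : ℤ) : Xbar R n ≤ ν.real (Iic (Xbar R n)) :=
  le_measureReal_Iic_of_forall_gt fun _ hz => hR.Xbar_le_measureReal_Iic hν hz

end IsStrictTotalBool

/-- Fix a strict total order `R` on `ℤ`.  If the empirical measures
`ν^N = (1/N) Σ_{k=1}^N δ_{X̄_k}` converge weakly to a probability measure `ν` on `[0,1]`,
then `ν[0, X̄₁) ≤ X̲₁ ≤ X̄₁ ≤ ν[0, X̄₁]`. -/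
theorem empirical_bounds (R : ℤ → ℤ → Bool) (hR : IsStrictTotalBool R)
    (ν : Measure ℝ) (hν : IsProbabilityMeasure ν) (hνsupp : ν (Set.Icc (0:ℝ) 1)ᶜ = 0)
    (hweak : ∀ g : BoundedContinuousFunction ℝ ℝ,
      Tendsto (fun N : ℕ => (N : ℝ)⁻¹ * ∑ k ∈ Finset.Icc (1:ℤ) (N:ℤ), g (Xbar R k)) atTop
        (nhds (∫ t, g t ∂ν))) :
    (ν (Set.Ico 0 (Xbar R 1))).toReal ≤ Xlow R 1 ∧
      Xlow R 1 ≤ Xbar R 1 ∧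
      Xbar R 1 ≤ (ν (Set.Icc 0 (Xbar R 1))).toReal := by
  have hlim : XbarEmpiricalTendsto R ν := hweak
  refine ⟨?_, Xlow_le_Xbar 1, ?_⟩
  · exact (measureReal_mono Ico_subset_Iio_self).trans (hR.measureReal_Iio_Xbar_le_Xlow hlim 1)
  · calc Xbar R 1 ≤ ν.real (Iic (Xbar R 1)) := hR.Xbar_le_measureReal_Iic_Xbar hlim 1
      _ = ν.real (Iic (Xbar R 1) ∩ Icc 0 1) := by
        rw [measureReal_def, measureReal_def, measure_inter_conull hνsupp]
      _ ≤ ν.real (Icc 0 (Xbar R 1)) := measureReal_mono fun t ht => ⟨ht.2.1, ht.1⟩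
end

section
/- If ⊲ is a random strict total order on ℤ whose law is invariant under all strictly increasing maps f : ℤ → ℤ, then the family of {0,1}-valued random variables (1_{k ⊲ 0} : k > 0) is exchangeable. -/
open MeasureTheory

/-!
Write `x ∘ skipAt i` for the sequence `x : ℤ → Bool` with its entry at `i` deleted. For `i ≥ 1`
both `skipAt i` and `skipAt (i + 1)` are strictly increasing and fix `0`, so spreadability gives
`P(x ∘ skipAt i ∈ C) = P(x ∈ C) = P(x ∘ skipAt (i + 1) ∈ C)` for every cylinder `C`. As
`skipAt (i + 1) = swap i (i + 1) ∘ skipAt i`, this compares a cylinder that leaves `x i` free with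
one that leaves `x (i + 1)` free; when both prescribe the value `0` at the remaining one of the two
positions, summing over the free value yields
`P(x_i = 1, x_{i+1} = 0, …) + P(x_i = 0, x_{i+1} = 0, …)`
`  = P(x_i = 0, x_{i+1} = 1, …) + P(x_i = 0, x_{i+1} = 0, …)`.
Hence the law of `x` is invariant under the adjacent transpositions `swap i (i + 1)`, `i ≥ 1`, which
generate every finitary permutation of the positive integers. The law of `k ↦ 1_{k ⊲ 0}` is
spreadable in this sense because a strictly increasing map fixing `0` preserves the law of `⊲`.
-/

open Equiv Function

section Cylinders

variable {ι κ β : Type*}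

def pointCylinder (s : Finset ι) (e : ι → β) : Set (ι → β) := {x | ∀ k ∈ s, x k = e k}

lemma measurableSet_pointCylinder [MeasurableSpace β] [MeasurableSingletonClass β]
    (s : Finset ι) (e : ι → β) : MeasurableSet (pointCylinder s e) := by
  convert Finset.measurableSet_biInter s fun k _ =>
    (measurableSet_singleton (e k)).preimage (measurable_pi_apply k)
  ext x
  simp [pointCylinder]

lemma preimage_comp_pointCylinder [DecidableEq ι] (f : κ → ι) (u : Finset κ) (e : ι → β) :
    (fun x : ι → β => x ∘ f) ⁻¹' pointCylinder u (e ∘ f) = pointCylinder (u.image f) e := by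
  ext x
  simp [pointCylinder]

lemma pointCylinder_insert [DecidableEq ι] {s : Finset ι} {j : ι} (hj : j ∉ s) (e : ι → β)
    (b : β) :
    pointCylinder (insert j s) (update e j b) = pointCylinder s e ∩ {x | x j = b} := by
  ext x
  simp only [pointCylinder, Finset.forall_mem_insert, update_self, Set.mem_inter_iff,
    Set.mem_ofPred_eq]
  rw [and_comm]
  refine and_congr_left fun _ => forall₂_congr fun k hk => ?_
  rw [update_of_ne (ne_of_mem_of_not_mem hk hj)]

lemma measure_pointCylinder_eq_add [DecidableEq ι] (μ : Measure (ι → Bool)) {s : Finset ι}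
    {j : ι} (hj : j ∉ s) (e : ι → Bool) :
    μ (pointCylinder s e) = μ (pointCylinder (insert j s) (update e j true))
      + μ (pointCylinder (insert j s) (update e j false)) := by
  have hdiff : pointCylinder s e \ {x | x j = true} = pointCylinder s e ∩ {x | x j = false} := by
    ext x; simp
  have hj_meas : MeasurableSet {x : ι → Bool | x j = true} :=
    (measurableSet_singleton true).preimage (measurable_pi_apply j)
  rw [pointCylinder_insert hj, pointCylinder_insert hj, ← hdiff,
    measure_inter_add_sdiff _ hj_meas]

lemma pointCylinder_eq_restrict_preimage (s : Finset ι) (x : ι → β) :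
    pointCylinder s x = Finset.restrict (π := fun _ => β) s ⁻¹' {s.restrict x} := by
  ext y
  simp [pointCylinder, funext_iff]

theorem MeasureTheory.Measure.ext_of_pointCylinder [MeasurableSpace β]
    [MeasurableSingletonClass β] [Countable β] {μ ν : Measure (ι → β)} [IsFiniteMeasure μ]
    (t : Finset ι)
    (h : ∀ s, t ⊆ s → ∀ e, μ (pointCylinder s e) = ν (pointCylinder s e)) : μ = ν := by
  classical
  have hmarg : ∀ s, t ⊆ s → ν.map s.restrict = μ.map s.restrict := by
    intro s hs
    refine Measure.ext_of_singleton fun a => ?_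
    rw [Measure.map_apply (Finset.measurable_restrict s) (measurableSet_singleton a),
      Measure.map_apply (Finset.measurable_restrict s) (measurableSet_singleton a)]
    by_cases ha : a ∈ Set.range (Finset.restrict (π := fun _ => β) s)
    · obtain ⟨x, rfl⟩ := ha
      rw [← pointCylinder_eq_restrict_preimage, h s hs]
    · rw [Set.preimage_singleton_eq_empty.mpr ha, measure_empty, measure_empty]
  refine IsProjectiveLimit.unique (P := fun s => μ.map s.restrict) (fun _ => rfl) fun s => ?_
  show ν.map s.restrict = μ.map s.restrict
  have hst : Finset.restrict₂ (π := fun _ => β) (Finset.subset_union_left (s₂ := t)) ∘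
      Finset.restrict (s ∪ t) = Finset.restrict (π := fun _ => β) s :=
    Finset.restrict₂_comp_restrict _
  rw [← hst, ← Measure.map_map (Finset.measurable_restrict₂ _) (Finset.measurable_restrict _),
    ← Measure.map_map (Finset.measurable_restrict₂ _) (Finset.measurable_restrict _),
    hmarg _ Finset.subset_union_right]

lemma measurable_comp_right [MeasurableSpace β] (f : κ → ι) :
    Measurable fun x : ι → β => x ∘ f :=
  measurable_pi_lambda _ fun k => measurable_pi_apply (f k)

lemma comp_swap_eq_self {α : Type*} [DecidableEq α] {f : α → β} {i j : α} (h : f i = f j) :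
    f ∘ swap i j = f := by
  rw [comp_swap_eq_update, h, update_eq_self, ← h, update_eq_self]

lemma comp_swap_comp_swap {α : Type*} [DecidableEq α] (f : α → β) (i j : α) :
    (f ∘ swap i j) ∘ swap i j = f := by
  ext; simp

lemma Finset.image_swap_eq_self {α : Type*} [DecidableEq α] {s : Finset α} {a b : α}
    (ha : a ∈ s) (hb : b ∈ s) : s.image (swap a b) = s := by
  refine Finset.coe_injective ?_
  rw [Finset.coe_image]
  exact Set.image_perm fun x hx => by
    rcases (swap_apply_ne_self_iff.mp hx).2 with rfl | rfl <;> assumption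

def invariantPerms [MeasurableSpace β] (μ : Measure (ι → β)) : Subgroup (Perm ι) where
  carrier := {σ | μ.map (fun x => x ∘ σ) = μ}
  one_mem' := Measure.map_id
  mul_mem' {σ τ} hσ hτ :=
    calc μ.map (fun x => x ∘ ⇑(σ * τ))
        = (μ.map fun x => x ∘ σ).map fun x => x ∘ τ := by
          rw [Measure.map_map (measurable_comp_right _) (measurable_comp_right _)]; rfl
      _ = μ := by rw [hσ, hτ]
  inv_mem' {σ} hσ :=
    calc μ.map (fun x => x ∘ ⇑σ⁻¹)
        = (μ.map fun x => x ∘ σ).map fun x => x ∘ ⇑σ⁻¹ := by rw [hσ]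
      _ = μ := by
        rw [Measure.map_map (measurable_comp_right _) (measurable_comp_right _)]
        convert Measure.map_id
        ext x k
        simp

end Cylinders

def skipAt (i k : ℤ) : ℤ := if k < i then k else k + 1

lemma strictMono_skipAt (i : ℤ) : StrictMono (skipAt i) := by
  intro a b h; simp only [skipAt]; split_ifs <;> omega

lemma skipAt_of_lt {i k : ℤ} (h : k < i) : skipAt i k = k := if_pos h

lemma range_skipAt (i : ℤ) : Set.range (skipAt i) = {i}ᶜ := by
  ext k
  simp only [Set.mem_range, Set.mem_compl_singleton_iff, skipAt]
  constructor
  · rintro ⟨m, rfl⟩; split_ifs <;> omega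
  · intro hk
    rcases lt_or_gt_of_ne hk with h | h
    · exact ⟨k, if_pos h⟩
    · exact ⟨k - 1, by rw [if_neg (by omega)]; omega⟩

lemma swap_comp_skipAt (i : ℤ) : swap i (i + 1) ∘ skipAt i = skipAt (i + 1) := by
  funext k
  simp only [comp_apply, skipAt, swap_apply_def]
  split_ifs <;> omega

def IsSpreadableOnPos {β : Type*} [MeasurableSpace β] (μ : Measure (ℤ → β)) : Prop :=
  ∀ f : ℤ → ℤ, StrictMono f → (∀ k ≤ 0, f k = k) → μ.map (fun x => x ∘ f) = μ

namespace IsSpreadableOnPos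

variable {μ : Measure (ℤ → Bool)}

lemma measure_pointCylinder_image (hμ : IsSpreadableOnPos μ) {f : ℤ → ℤ} (hf : StrictMono f)
    (hf₀ : ∀ k ≤ 0, f k = k) (u : Finset ℤ) (e : ℤ → Bool) :
    μ (pointCylinder (u.image f) e) = μ (pointCylinder u (e ∘ f)) := by
  rw [← preimage_comp_pointCylinder, ← Measure.map_apply (measurable_comp_right f)
    (measurableSet_pointCylinder _ _), hμ f hf hf₀]

lemma measure_skipAt_image (hμ : IsSpreadableOnPos μ) {i : ℤ} (hi : 1 ≤ i) (u : Finset ℤ)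
    (e : ℤ → Bool) :
    μ (pointCylinder (u.image (skipAt i)) e) = μ (pointCylinder u (e ∘ skipAt i)) :=
  hμ.measure_pointCylinder_image (strictMono_skipAt i) (fun _ hk => skipAt_of_lt (by omega)) u e

lemma measure_erase_succ_eq_measure_erase (hμ : IsSpreadableOnPos μ) {i : ℤ} (hi : 1 ≤ i)
    {s : Finset ℤ} (hs : i ∈ s) (hs' : i + 1 ∈ s) {e : ℤ → Bool} (he : e i = e (i + 1)) :
    μ (pointCylinder (s.erase (i + 1)) e) = μ (pointCylinder (s.erase i) e) := by
  classical
  set u := s.preimage (skipAt i) (strictMono_skipAt i).injective.injOn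
  have hu : u.image (skipAt i) = s.erase i := by
    rw [Finset.image_preimage, range_skipAt]
    ext k
    simp [and_comm]
  have hu' : u.image (skipAt (i + 1)) = s.erase (i + 1) := by
    rw [← swap_comp_skipAt, ← Finset.image_image, hu,
      Finset.image_erase (swap i (i + 1)).injective, Finset.image_swap_eq_self hs hs',
      swap_apply_left]
  calc μ (pointCylinder (s.erase (i + 1)) e)
      = μ (pointCylinder u ((e ∘ swap i (i + 1)) ∘ skipAt i)) := by
        rw [← hu', hμ.measure_skipAt_image (by omega), ← swap_comp_skipAt]; rfl
    _ = μ (pointCylinder (s.erase i) e) := by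
        rw [comp_swap_eq_self he, ← hu, hμ.measure_skipAt_image hi]

lemma measure_pointCylinder_comp_swap_of_true_false [IsFiniteMeasure μ]
    (hμ : IsSpreadableOnPos μ) {i : ℤ} (hi : 1 ≤ i) {s : Finset ℤ} (hs : i ∈ s)
    (hs' : i + 1 ∈ s) {e : ℤ → Bool} (h₁ : e i = true) (h₀ : e (i + 1) = false) :
    μ (pointCylinder s (e ∘ swap i (i + 1))) = μ (pointCylinder s e) := by
  have hne : i + 1 ≠ i := by omega
  set g := update e i false with hg
  have hg_swap : e ∘ swap i (i + 1) = update g (i + 1) true := by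
    rw [comp_swap_eq_update, h₁, h₀, update_comm hne]
  have hg_true : update g i true = e := by rw [update_idem, ← h₁, update_eq_self]
  have hg_false : update g i false = g := update_idem _ _ _
  have hg_false' : update g (i + 1) false = g := by
    rw [update_eq_self_iff, hg, update_of_ne hne, h₀]
  have hdel := hμ.measure_erase_succ_eq_measure_erase hi hs hs'
    (e := g) (by rw [hg, update_self, update_of_ne hne, h₀])
  rw [measure_pointCylinder_eq_add μ (s.notMem_erase (i + 1)),
    measure_pointCylinder_eq_add μ (s.notMem_erase i), Finset.insert_erase hs,
    Finset.insert_erase hs', hg_false, hg_false', hg_true] at hdel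
  -- `hdel` now reads `P(x_i = 0, x_{i+1} = 1, …) + P(g) = P(x_i = 1, x_{i+1} = 0, …) + P(g)`.
  rw [hg_swap]
  exact (ENNReal.add_left_inj (measure_ne_top μ _)).mp hdel

lemma measure_pointCylinder_comp_swap [IsFiniteMeasure μ] (hμ : IsSpreadableOnPos μ)
    {i : ℤ} (hi : 1 ≤ i) {s : Finset ℤ} (hs : i ∈ s) (hs' : i + 1 ∈ s) (e : ℤ → Bool) :
    μ (pointCylinder s (e ∘ swap i (i + 1))) = μ (pointCylinder s e) := by
  cases h₁ : e i <;> cases h₀ : e (i + 1)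
  · rw [comp_swap_eq_self (h₁.trans h₀.symm)]
  · have h := hμ.measure_pointCylinder_comp_swap_of_true_false hi hs hs'
      (e := e ∘ swap i (i + 1)) (by simp [h₀]) (by simp [h₁])
    rw [comp_swap_comp_swap] at h
    exact h.symm
  · exact hμ.measure_pointCylinder_comp_swap_of_true_false hi hs hs' h₁ h₀
  · rw [comp_swap_eq_self (h₁.trans h₀.symm)]

lemma swap_mem_invariantPerms [IsFiniteMeasure μ] (hμ : IsSpreadableOnPos μ) {i : ℤ}
    (hi : 1 ≤ i) :
    swap i (i + 1) ∈ invariantPerms μ := by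
  refine (Measure.ext_of_pointCylinder (μ := μ) {i, i + 1} fun s hs e => ?_).symm
  have hi_mem : i ∈ s := hs (by simp)
  have hi_mem' : i + 1 ∈ s := hs (by simp)
  have hpre : (fun x : ℤ → Bool => x ∘ swap i (i + 1)) ⁻¹' pointCylinder s e
      = pointCylinder s (e ∘ swap i (i + 1)) := by
    have h := preimage_comp_pointCylinder (swap i (i + 1)) s (e ∘ swap i (i + 1))
    rwa [comp_swap_comp_swap, Finset.image_swap_eq_self hi_mem hi_mem'] at h
  rw [Measure.map_apply (measurable_comp_right _) (measurableSet_pointCylinder _ _), hpre,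
    hμ.measure_pointCylinder_comp_swap hi hi_mem hi_mem']

end IsSpreadableOnPos

lemma mem_closure_adjacent_swaps {σ : Perm ℤ} (hfin : {k | σ k ≠ k}.Finite)
    (hfix : ∀ k ≤ 0, σ k = k) :
    σ ∈ Subgroup.closure ((fun i : ℤ => swap i (i + 1)) '' Set.Ici 1) := by
  set S := (fun i : ℤ => swap i (i + 1)) '' Set.Ici 1
  have hS : ∀ f ∈ S, f.IsSwap := by
    rintro _ ⟨i, -, rfl⟩
    exact ⟨i, i + 1, by omega, rfl⟩
  have horbit : ∀ a ≥ 1, a ∈ MulAction.orbit (Subgroup.closure S) (1 : ℤ) := by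
    intro a ha
    induction a, ha using Int.leInduction with
    | base => exact MulAction.mem_orbit_self 1
    | succ a ha ih =>
      simpa using MulAction.mem_orbit_of_mem_orbit
        (⟨swap a (a + 1), Subgroup.subset_closure ⟨a, ha, rfl⟩⟩ : Subgroup.closure S) ih
  rw [mem_closure_isSwap hS]
  refine ⟨by simpa [Set.compl_def, MulAction.mem_fixedBy] using hfin, fun x => ?_⟩
  by_cases hx : x ≤ 0
  · rw [hfix x hx]
    exact MulAction.mem_orbit_self x
  have hσx : 1 ≤ σ x := by
    by_contra h
    have : σ x = x := σ.injective (hfix (σ x) (by omega))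
    omega
  rw [MulAction.orbit_eq_iff.mpr (horbit x (by omega))]
  exact horbit (σ x) hσx

theorem IsSpreadableOnPos.mem_invariantPerms {μ : Measure (ℤ → Bool)} [IsFiniteMeasure μ]
    (hμ : IsSpreadableOnPos μ) {σ : Perm ℤ} (hfin : {k | σ k ≠ k}.Finite)
    (hfix : ∀ k ≤ 0, σ k = k) : σ ∈ invariantPerms μ :=
  (Subgroup.closure_le _).mpr (by rintro _ ⟨i, hi, rfl⟩; exact hμ.swap_mem_invariantPerms hi)
    (mem_closure_adjacent_swaps hfin hfix)

theorem indicators_exchangeable_general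
    {Ω : Type*} [MeasurableSpace Ω] (P : Measure Ω) [IsProbabilityMeasure P]
    (T : Ω → ℤ → ℤ → Bool) (hmeas : Measurable T)
    (hinv : ∀ f : ℤ → ℤ, StrictMono f →
      P.map (fun ω => fun m n => T ω (f m) (f n)) = P.map T) :
    ∀ σ : Equiv.Perm ℤ, {k : ℤ | σ k ≠ k}.Finite → (∀ k : ℤ, k ≤ 0 → σ k = k) →
      P.map (fun ω => fun k : ℤ => T ω (σ k) 0) = P.map (fun ω => fun k : ℤ => T ω k 0) := by
  intro σ hfin hfix
  have hX : Measurable fun ω k => T ω k 0 := by fun_prop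
  have hspread : IsSpreadableOnPos (P.map fun ω k => T ω k 0) := by
    intro f hf hf₀
    have hfactor : (fun x : ℤ → Bool => x ∘ f) ∘ (fun ω k => T ω k 0)
        = (fun g : ℤ → ℤ → Bool => fun k => g k 0) ∘ fun ω m n => T ω (f m) (f n) := by
      funext ω k
      simp [hf₀ 0 le_rfl]
    rw [Measure.map_map (measurable_comp_right f) hX, hfactor,
      ← Measure.map_map (by fun_prop) (by fun_prop), hinv f hf,
      Measure.map_map (by fun_prop) hmeas]
    rfl
  calc P.map (fun ω k => T ω (σ k) 0)
      = (P.map fun ω k => T ω k 0).map fun x => x ∘ σ := by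
        rw [Measure.map_map (measurable_comp_right _) hX]; rfl
    _ = P.map fun ω k => T ω k 0 := hspread.mem_invariantPerms hfin hfix

/-- If `⊲` is a random strict total order on `ℤ` whose law is invariant under all strictly
increasing maps `f : ℤ → ℤ`, then the family `(1_{k ⊲ 0} : k > 0)` is exchangeable:
its law is invariant under every finite permutation of the positive integers. -/
theorem indicators_exchangeable
    {Ω : Type*} [MeasurableSpace Ω] (P : Measure Ω) [IsProbabilityMeasure P]
    (T : Ω → ℤ → ℤ → Bool) (hmeas : Measurable T)
    (hSTO : ∀ ω, IsStrictTotalBool (T ω))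
    (hinv : ∀ f : ℤ → ℤ, StrictMono f →
      P.map (fun ω => fun m n => T ω (f m) (f n)) = P.map T) :
    ∀ σ : Equiv.Perm ℤ, {k : ℤ | σ k ≠ k}.Finite → (∀ k : ℤ, k ≤ 0 → σ k = k) →
      P.map (fun ω => fun k : ℤ => T ω (σ k) 0) = P.map (fun ω => fun k : ℤ => T ω k 0) :=
  indicators_exchangeable_general P T hmeas hinv
end

section
/- If ⊲ is a random strict total order on ℤ whose law is invariant under all strictly increasing maps of ℤ, then almost surely for every n the limits X_n = lim_{N→∞} (1/N) Σ_{k=-N}^{n} 1_{k ⊲ n} and Y_n = lim_{N→∞} (1/N) Σ_{k=n}^{N} 1_{k ⊲ n} exist, and for all m < n, m ⊲ n holds if and only if X_m < X_n, or Y_m < Y_n, or (X_m = X_n and Y_m = Y_n and X_m > Y_m). -/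
/-
Write `X_c`, `Y_c` for the densities of `{k < c : k ⊲ c}` and `{k > c : k ⊲ c}`.
I-invariance makes the second moments of the indicators `1[c - 1 - j ⊲ c]` depend only on whether
the indices coincide, so an `L²` estimate along the cubes gives almost sure convergence of their
averages; it also lets densities travel with the points under maps that are translations
near `±∞`. By transitivity the densities are monotone along `⊲`, which yields the representation
except at ties `X_m = X_n`, `Y_m = Y_n`, where two bad events remain: `n ⊲ m` with `Y_m < X_m`,
and `m ⊲ n` with `X_m ≤ Y_m`. In both cases the points strictly between `0` and `r + 1` compare
the left averages at `r + 1` with the right averages at `0`, and invariance bounds the relevant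
expectation by the expected error of these averages, which vanishes as `r → ∞`. This kills the
first event directly; for the second it shows that almost surely no two bad pairs chain, which
forces the density of `{a > 0 : (0, a) is bad}` to vanish, while its mean is the probability of
the event.
-/

open MeasureTheory Filter

theorem IsStrictTotalBool.trans {R : ℤ → ℤ → Bool} (hR : IsStrictTotalBool R) {a b c : ℤ}
    (hab : R a b) (hbc : R b c) : R a c :=
  hR.2.1 a b c hab hbc

theorem IsStrictTotalBool.asymm {R : ℤ → ℤ → Bool} (hR : IsStrictTotalBool R) {a b : ℤ}
    (hab : R a b) : ¬R b a := fun hba => by simpa [hR.1 a] using hR.trans hab hba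

theorem IsStrictTotalBool.rel_of_not_rel {R : ℤ → ℤ → Bool} (hR : IsStrictTotalBool R) {a b : ℤ}
    (hne : a ≠ b) (hab : ¬R a b) : R b a := by
  simpa [hab] using hR.2.2 a b hne

open Finset Topology

namespace IInvariantOrder

noncomputable def avg (u : ℕ → ℝ) (N : ℕ) : ℝ := (N : ℝ)⁻¹ * ∑ j ∈ range N, u j

lemma avg_mono {u v : ℕ → ℝ} (h : ∀ j, u j ≤ v j) (N : ℕ) : avg u N ≤ avg v N :=
  mul_le_mul_of_nonneg_left (sum_le_sum fun j _ => h j) (by positivity)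

lemma avg_add (u v : ℕ → ℝ) (N : ℕ) : avg (u + v) N = avg u N + avg v N := by
  simp only [avg, Pi.add_apply, sum_add_distrib, mul_add]

lemma avg_sub (u v : ℕ → ℝ) (N : ℕ) : avg (u - v) N = avg u N - avg v N := by
  simp only [avg, Pi.sub_apply, sum_sub_distrib, mul_sub]

lemma avg_mem_Icc {u : ℕ → ℝ} (h : ∀ j, u j ∈ Set.Icc (0 : ℝ) 1) (N : ℕ) :
    avg u N ∈ Set.Icc (0 : ℝ) 1 := by
  rcases N.eq_zero_or_pos with rfl | hN
  · simp [avg]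
  refine ⟨mul_nonneg (by positivity) (sum_nonneg fun j _ => (h j).1), ?_⟩
  rw [avg, inv_mul_le_iff₀ (by positivity), mul_one]
  simpa using sum_le_sum fun j (_ : j ∈ range N) => (h j).2

lemma natCast_mul_avg (u : ℕ → ℝ) (N : ℕ) : (N : ℝ) * avg u N = ∑ j ∈ range N, u j := by
  rcases N.eq_zero_or_pos with rfl | hN
  · simp
  · rw [avg, mul_inv_cancel_left₀ (by positivity)]

lemma tendsto_inv_mul_of_abs_sub_le {a b : ℕ → ℝ} {L : ℝ} (C : ℝ)
    (h : ∀ᶠ N in atTop, |a N - b N| ≤ C)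
    (hb : Tendsto (fun N : ℕ => (N : ℝ)⁻¹ * b N) atTop (𝓝 L)) :
    Tendsto (fun N : ℕ => (N : ℝ)⁻¹ * a N) atTop (𝓝 L) := by
  have herr : Tendsto (fun N : ℕ => (N : ℝ)⁻¹ * (a N - b N)) atTop (𝓝 0) := by
    refine squeeze_zero_norm' (a := fun N : ℕ => C * (N : ℝ)⁻¹) ?_
      (by simpa using (tendsto_inv_atTop_zero.comp tendsto_natCast_atTop_atTop).const_mul C)
    filter_upwards [h] with N hN
    rw [norm_mul, norm_inv, Real.norm_natCast, Real.norm_eq_abs, mul_comm]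
    exact mul_le_mul_of_nonneg_right hN (by positivity)
  simpa [mul_sub] using hb.add herr

lemma abs_sum_range_sub_sum_range_le {u : ℕ → ℝ} (hu : ∀ j, |u j| ≤ 1) (M N : ℕ) :
    |∑ j ∈ range M, u j - ∑ j ∈ range N, u j| ≤ |(M : ℝ) - N| := by
  wlog hMN : N ≤ M generalizing M N
  · rw [abs_sub_comm, abs_sub_comm (M : ℝ)]; exact this N M (by omega)
  rw [← sum_range_add_sum_Ico u hMN, add_sub_cancel_left, ← Nat.cast_sub hMN, Nat.abs_cast]
  calc |∑ j ∈ Ico N M, u j| ≤ ∑ j ∈ Ico N M, |u j| := abs_sum_le_sum_abs _ _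
    _ ≤ ∑ _j ∈ Ico N M, (1 : ℝ) := sum_le_sum fun j _ => hu j
    _ = ((M - N : ℕ) : ℝ) := by simp

lemma tendsto_avg_congr {u v : ℕ → ℝ} {L : ℝ} (h : u =ᶠ[atTop] v)
    (hv : Tendsto (avg v) atTop (𝓝 L)) : Tendsto (avg u) atTop (𝓝 L) := by
  obtain ⟨j₀, hj₀⟩ := eventually_atTop.1 h
  refine tendsto_inv_mul_of_abs_sub_le (∑ j ∈ range j₀, |u j - v j|) (.of_forall fun N => ?_) hv
  rw [← sum_sub_distrib]
  refine (abs_sum_le_sum_abs _ _).trans ?_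
  rcases le_total N j₀ with hN | hN
  · exact sum_le_sum_of_subset_of_nonneg (range_mono hN) fun _ _ _ => abs_nonneg _
  · rw [← sum_range_add_sum_Ico _ hN, sum_eq_zero (s := Ico j₀ N), add_zero]
    intro j hj
    rw [hj₀ j (mem_Ico.1 hj).1, sub_self, abs_zero]

lemma tendsto_avg_comp_add_iff {u : ℕ → ℝ} {L : ℝ} (hu : ∀ j, |u j| ≤ 1) (δ : ℕ) :
    Tendsto (avg fun j => u (j + δ)) atTop (𝓝 L) ↔ Tendsto (avg u) atTop (𝓝 L) := by
  have hshift : ∀ N, |∑ j ∈ range N, u (j + δ) - ∑ j ∈ range N, u j| ≤ 2 * δ := by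
    intro N
    have hsplit := sum_range_add u δ N
    simp only [add_comm δ] at hsplit
    have h₁ : |∑ j ∈ range (N + δ), u j - ∑ j ∈ range N, u j| ≤ δ := by
      simpa using abs_sum_range_sub_sum_range_le hu (N + δ) N
    have h₂ : |∑ j ∈ range δ, u j| ≤ δ := by
      simpa using abs_sum_range_sub_sum_range_le hu δ 0
    calc |∑ j ∈ range N, u (j + δ) - ∑ j ∈ range N, u j|
        = |(∑ j ∈ range (N + δ), u j - ∑ j ∈ range N, u j) - ∑ j ∈ range δ, u j| := by
          rw [hsplit]; congr 1; ring
      _ ≤ δ + δ := (abs_sub _ _).trans (add_le_add h₁ h₂)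
      _ = 2 * δ := by ring
  constructor
  · exact tendsto_inv_mul_of_abs_sub_le _ (.of_forall fun N => by
      rw [abs_sub_comm]; exact hshift N)
  · exact tendsto_inv_mul_of_abs_sub_le _ (.of_forall hshift)

lemma cauchySeq_of_summable_mul_sq {x w : ℕ → ℝ} (hw : ∀ k, 0 < w k)
    (hsq : Summable fun k => w k * (x (k + 1) - x k) ^ 2)
    (hinv : Summable fun k => (w k)⁻¹) : CauchySeq x := by
  refine cauchySeq_of_summable_dist <| Summable.of_nonneg_of_le (fun k => dist_nonneg)
    (fun k => ?_) ((hsq.add hinv).div_const 2)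
  rw [Real.dist_eq, abs_sub_comm, le_div_iff₀ two_pos, ← sq_abs (x (k + 1) - x k)]
  set t := |x (k + 1) - x k|
  have hwk := hw k
  have hsplit : w k * t ^ 2 + (w k)⁻¹ - t * 2 = (w k)⁻¹ * (w k * t - 1) ^ 2 := by
    field_simp; ring
  nlinarith [hsplit, mul_nonneg (inv_nonneg.2 hwk.le) (sq_nonneg (w k * t - 1))]

lemma summable_inv_succ_sq : Summable fun k : ℕ => (((k : ℝ) + 1) ^ 2)⁻¹ := by
  simpa using (summable_nat_add_iff 1).2 (Real.summable_nat_pow_inv.2 one_lt_two)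

lemma summable_succ_sq_mul_inv_cube_sub :
    Summable fun k : ℕ => ((k : ℝ) + 1) ^ 2 * ((((k : ℝ) + 1) ^ 3)⁻¹ - (((k : ℝ) + 2) ^ 3)⁻¹) := by
  refine Summable.of_nonneg_of_le (fun k => ?_) (fun k => ?_) (summable_inv_succ_sq.mul_left 3)
  · have : (((k : ℝ) + 2) ^ 3)⁻¹ ≤ (((k : ℝ) + 1) ^ 3)⁻¹ :=
      inv_anti₀ (by positivity) (by gcongr; linarith)
    exact mul_nonneg (by positivity) (sub_nonneg.2 this)
  · have hk : (0 : ℝ) ≤ k := k.cast_nonneg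
    field_simp
    nlinarith [pow_pos (show (0 : ℝ) < k + 1 by linarith) 3]

lemma tendsto_avg_of_tendsto_avg_cube {u : ℕ → ℝ} {L : ℝ} (hu : ∀ j, 0 ≤ u j)
    (h : Tendsto (fun k => avg u ((k + 1) ^ 3)) atTop (𝓝 L)) : Tendsto (avg u) atTop (𝓝 L) := by
  have hmono : Monotone fun N => ∑ j ∈ range N, u j :=
    monotone_nat_of_le_succ fun N => by rw [sum_range_succ]; linarith [hu N]
  have hratio : Tendsto (fun k : ℕ => (((k : ℝ) + 1) / ((k : ℝ) + 1 + 1))⁻¹ ^ 3) atTop (𝓝 1) := by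
    simpa using (((tendsto_natCast_div_add_atTop (1 : ℝ)).comp
      (tendsto_add_atTop_nat 1)).inv₀ one_ne_zero).pow 3
  have key := tendsto_div_of_monotone_of_exists_subseq_tendsto_div _ L hmono fun a ha =>
    ⟨fun k => (k + 1) ^ 3, ?_, (tendsto_pow_atTop three_ne_zero).comp (tendsto_add_atTop_nat 1),
      by simpa [avg, inv_mul_eq_div] using h⟩
  · exact key.congr fun N => by rw [avg, inv_mul_eq_div]
  · filter_upwards [hratio.eventually (eventually_lt_nhds ha)] with k hk
    rw [inv_div, div_pow, div_lt_iff₀ (by positivity)] at hk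
    push_cast
    exact hk.le

section SecondMoment

variable {Ω : Type*} [MeasurableSpace Ω] {μ : Measure Ω}

lemma ae_summable_norm_of_summable_integral_norm {ι E : Type*} [Countable ι]
    [NormedAddCommGroup E] {f : ι → Ω → E} (hf : ∀ i, Integrable (f i) μ)
    (hs : Summable fun i => ∫ ω, ‖f i ω‖ ∂μ) : ∀ᵐ ω ∂μ, Summable fun i => ‖f i ω‖ := by
  refine summable_norm_of_tsum_eLpNorm_ne_top le_rfl (fun i => (hf i).aestronglyMeasurable) ?_
  have h1 : ∀ i, eLpNorm (f i) 1 μ = ENNReal.ofReal (∫ ω, ‖f i ω‖ ∂μ) := fun i => by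
    rw [eLpNorm_one_eq_lintegral_enorm, ofReal_integral_norm_eq_lintegral_enorm (hf i)]
  simp_rw [h1, ← ENNReal.ofReal_tsum_of_nonneg (fun i => integral_nonneg fun _ => norm_nonneg _) hs]
  exact ENNReal.ofReal_ne_top

variable {A : ℕ → Ω → ℝ} {q c : ℝ}

lemma integral_sum_range_mul_sum_range (hint : ∀ i j, Integrable (fun ω => A i ω * A j ω) μ)
    (hdiag : ∀ i, ∫ ω, A i ω * A i ω ∂μ = q) (hoff : ∀ i j, i ≠ j → ∫ ω, A i ω * A j ω ∂μ = c)
    {M N : ℕ} (hMN : M ≤ N) :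
    ∫ ω, (∑ i ∈ range N, A i ω) * ∑ j ∈ range M, A j ω ∂μ = M * q + (N * M - M) * c := by
  have hentry : ∀ i j, ∫ ω, A i ω * A j ω ∂μ = c + if i = j then q - c else 0 := by
    intro i j
    split_ifs with h
    · subst h; rw [hdiag]; ring
    · rw [hoff i j h]; ring
  simp_rw [sum_mul_sum]
  rw [integral_finsetSum _ fun i _ => integrable_finsetSum _ fun j _ => hint i j,
    sum_congr rfl fun i _ => integral_finsetSum _ fun j _ => hint i j]
  simp_rw [hentry, sum_add_distrib, sum_ite_eq, sum_ite_mem, range_inter_range, min_eq_right hMN]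
  simp only [sum_const, card_range, nsmul_eq_mul]
  ring

lemma integral_sq_avg_sub_avg (hint : ∀ i j, Integrable (fun ω => A i ω * A j ω) μ)
    (hdiag : ∀ i, ∫ ω, A i ω * A i ω ∂μ = q) (hoff : ∀ i j, i ≠ j → ∫ ω, A i ω * A j ω ∂μ = c)
    {M N : ℕ} (hM : 0 < M) (hMN : M ≤ N) :
    ∫ ω, (avg (A · ω) N - avg (A · ω) M) ^ 2 ∂μ = (q - c) * ((M : ℝ)⁻¹ - (N : ℝ)⁻¹) := by
  set S : ℕ → Ω → ℝ := fun K ω => ∑ i ∈ range K, A i ω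
  have hS : ∀ K L, Integrable (fun ω => S K ω * S L ω) μ := fun K L => by
    simp_rw [S, sum_mul_sum]
    exact integrable_finsetSum _ fun i _ => integrable_finsetSum _ fun j _ => hint i j
  have hmom : ∀ {K L : ℕ}, K ≤ L → ∫ ω, S L ω * S K ω ∂μ = K * q + (L * K - K) * c :=
    fun h => integral_sum_range_mul_sum_range hint hdiag hoff h
  have expand : (fun ω => (avg (A · ω) N - avg (A · ω) M) ^ 2) = fun ω =>
      (N : ℝ)⁻¹ ^ 2 * (S N ω * S N ω) - 2 * ((N : ℝ)⁻¹ * (M : ℝ)⁻¹) * (S N ω * S M ω)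
        + (M : ℝ)⁻¹ ^ 2 * (S M ω * S M ω) := by
    funext ω; simp only [avg, S]; ring
  rw [expand, integral_add, integral_sub, integral_const_mul, integral_const_mul,
    integral_const_mul, hmom le_rfl, hmom hMN, hmom le_rfl]
  rotate_left
  · exact (hS N N).const_mul _
  · exact (hS N M).const_mul _
  · exact ((hS N N).const_mul _).sub ((hS N M).const_mul _)
  · exact (hS M M).const_mul _
  have hN : (0 : ℝ) < N := by exact_mod_cast hM.trans_le hMN
  have hM' : (0 : ℝ) < M := by exact_mod_cast hM
  field_simp
  ring

lemma measurable_avg (hAm : ∀ i, Measurable (A i)) (N : ℕ) :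
    Measurable fun ω => avg (A · ω) N :=
  (Finset.measurable_sum _ fun i _ => hAm i).const_mul _

lemma ae_summable_succ_sq_mul_sq_avg_cube_sub [IsFiniteMeasure μ] (hAm : ∀ i, Measurable (A i))
    (hA : ∀ i ω, A i ω ∈ Set.Icc (0 : ℝ) 1) (hdiag : ∀ i, ∫ ω, A i ω * A i ω ∂μ = q)
    (hoff : ∀ i j, i < j → ∫ ω, A i ω * A j ω ∂μ = c) :
    ∀ᵐ ω ∂μ, Summable fun k : ℕ =>
      ((k : ℝ) + 1) ^ 2 * (avg (A · ω) ((k + 1 + 1) ^ 3) - avg (A · ω) ((k + 1) ^ 3)) ^ 2 := by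
  have hint : ∀ i j, Integrable (fun ω => A i ω * A j ω) μ := fun i j =>
    .of_bound ((hAm i).mul (hAm j)).aestronglyMeasurable 1 <| .of_forall fun ω => by
      rw [norm_mul, Real.norm_of_nonneg (hA i ω).1, Real.norm_of_nonneg (hA j ω).1]
      exact mul_le_one₀ (hA i ω).2 (hA j ω).1 (hA j ω).2
  have hoff' : ∀ i j, i ≠ j → ∫ ω, A i ω * A j ω ∂μ = c := by
    intro i j hij
    rcases hij.lt_or_gt with h | h
    · exact hoff i j h
    · simpa only [mul_comm] using hoff j i h
  set F : ℕ → Ω → ℝ := fun k ω =>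
    ((k : ℝ) + 1) ^ 2 * (avg (A · ω) ((k + 1 + 1) ^ 3) - avg (A · ω) ((k + 1) ^ 3)) ^ 2
  have hF : ∀ k, Integrable (F k) μ := fun k =>
    .of_bound (((measurable_avg hAm _).sub (measurable_avg hAm _)).pow_const 2
      |>.const_mul _).aestronglyMeasurable (((k : ℝ) + 1) ^ 2) <| .of_forall fun ω => by
      have h₁ := avg_mem_Icc (hA · ω) ((k + 1 + 1) ^ 3)
      have h₂ := avg_mem_Icc (hA · ω) ((k + 1) ^ 3)
      rw [Real.norm_of_nonneg (by positivity)]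
      refine mul_le_of_le_one_right (by positivity) ?_
      rw [sq_le_one_iff_abs_le_one, abs_le]
      constructor <;> linarith [h₁.1, h₁.2, h₂.1, h₂.2]
  have hFint : ∀ k, ∫ ω, ‖F k ω‖ ∂μ =
      (q - c) * (((k : ℝ) + 1) ^ 2 * ((((k : ℝ) + 1) ^ 3)⁻¹ - (((k : ℝ) + 2) ^ 3)⁻¹)) := by
    intro k
    simp_rw [F, Real.norm_of_nonneg (by positivity : (0 : ℝ) ≤ ((k : ℝ) + 1) ^ 2 * (_ - _) ^ 2)]
    rw [integral_const_mul, integral_sq_avg_sub_avg hint hdiag hoff' (by positivity)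
      (Nat.pow_le_pow_left (by omega) 3)]
    push_cast
    ring_nf
  filter_upwards [ae_summable_norm_of_summable_integral_norm hF
    (by simpa only [hFint] using summable_succ_sq_mul_inv_cube_sub.mul_left (q - c))] with ω hω
  exact hω.congr fun k => Real.norm_of_nonneg (by positivity)

theorem ae_exists_tendsto_avg_of_integral_mul [IsFiniteMeasure μ] (hAm : ∀ i, Measurable (A i))
    (hA : ∀ i ω, A i ω ∈ Set.Icc (0 : ℝ) 1) (hdiag : ∀ i, ∫ ω, A i ω * A i ω ∂μ = q)
    (hoff : ∀ i j, i < j → ∫ ω, A i ω * A j ω ∂μ = c) :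
    ∀ᵐ ω ∂μ, ∃ L, Tendsto (avg (A · ω)) atTop (𝓝 L) := by
  filter_upwards [ae_summable_succ_sq_mul_sq_avg_cube_sub hAm hA hdiag hoff] with ω hω
  have hcauchy : CauchySeq fun k => avg (A · ω) ((k + 1) ^ 3) :=
    cauchySeq_of_summable_mul_sq (w := fun k => ((k : ℝ) + 1) ^ 2) (fun k => by positivity) hω
      summable_inv_succ_sq
  obtain ⟨L, hL⟩ := cauchySeq_tendsto_of_complete hcauchy
  exact ⟨L, tendsto_avg_of_tendsto_avg_cube (fun j => (hA j ω).1) hL⟩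

end SecondMoment

abbrev BoolRel := ℤ → ℤ → Bool

def comap (f : ℤ → ℤ) (R : BoolRel) : BoolRel := fun m n => R (f m) (f n)

def ind (b : Bool) : ℝ := if b then 1 else 0

lemma ind_mem_Icc (b : Bool) : ind b ∈ Set.Icc (0 : ℝ) 1 := by
  cases b <;> simp [ind]

lemma abs_ind_le_one (b : Bool) : |ind b| ≤ 1 := by
  cases b <;> simp [ind]

lemma ind_le_ind {a b : Bool} (h : a → b) : ind a ≤ ind b := by
  cases a <;> cases b <;> simp_all [ind]

lemma measurable_ind_apply (a b : ℤ) : Measurable fun R : BoolRel => ind (R a b) :=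
  (measurable_from_top : Measurable ind).comp ((measurable_pi_apply b).comp (measurable_pi_apply a))

def leftSeq (R : BoolRel) (c : ℤ) (j : ℕ) : ℝ := ind (R (c - (j + 1)) c)

def rightSeq (R : BoolRel) (c : ℤ) (j : ℕ) : ℝ := ind (R (c + (j + 1)) c)

/-- `limUnder` is a junk value unless the averages converge, see `HasDensities`. -/
noncomputable def leftDensity (R : BoolRel) (c : ℤ) : ℝ := limUnder atTop (avg (leftSeq R c))

noncomputable def rightDensity (R : BoolRel) (c : ℤ) : ℝ := limUnder atTop (avg (rightSeq R c))

def HasDensities (R : BoolRel) : Prop :=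
  ∀ c, (∃ L, Tendsto (avg (leftSeq R c)) atTop (𝓝 L)) ∧
    ∃ L, Tendsto (avg (rightSeq R c)) atTop (𝓝 L)

lemma measurable_leftDensity (c : ℤ) : Measurable fun R => leftDensity R c :=
  (StronglyMeasurable.limUnder fun N => (measurable_avg (A := fun j R => leftSeq R c j)
    (fun _ => measurable_ind_apply _ _) N).stronglyMeasurable).measurable

lemma measurable_rightDensity (c : ℤ) : Measurable fun R => rightDensity R c :=
  (StronglyMeasurable.limUnder fun N => (measurable_avg (A := fun j R => rightSeq R c j)
    (fun _ => measurable_ind_apply _ _) N).stronglyMeasurable).measurable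

lemma leftSeq_add_toNat (R : BoolRel) {c M : ℤ} (h : M ≤ c) (j : ℕ) :
    leftSeq R c (j + (c - M).toNat) = ind (R (M - (j + 1)) c) := by
  simp only [leftSeq]; congr 2; push_cast; omega

lemma rightSeq_add_toNat (R : BoolRel) {c M : ℤ} (h : c ≤ M) (j : ℕ) :
    rightSeq R c (j + (M - c).toNat) = ind (R (M + (j + 1)) c) := by
  simp only [rightSeq]; congr 2; push_cast; omega

lemma sum_range_leftSeq (R : BoolRel) (c : ℤ) (M : ℕ) :
    ∑ j ∈ range M, leftSeq R c j = ∑ k ∈ Ico (c - M) c, ind (R k c) :=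
  sum_nbij' (fun j => c - (j + 1)) (fun k => (c - 1 - k).toNat)
    (fun j hj => by simp at hj ⊢; omega) (fun k hk => by simp at hk ⊢; omega)
    (fun j _ => by simp) (fun k hk => by simp at hk ⊢; omega) (fun j _ => rfl)

lemma sum_range_rightSeq (R : BoolRel) (c : ℤ) (M : ℕ) :
    ∑ j ∈ range M, rightSeq R c j = ∑ k ∈ Ioc c (c + M), ind (R k c) :=
  sum_nbij' (fun j => c + (j + 1)) (fun k => (k - c - 1).toNat)
    (fun j hj => by simp at hj ⊢; omega) (fun k hk => by simp at hk ⊢; omega)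
    (fun j _ => by simp) (fun k hk => by simp at hk ⊢; omega) (fun j _ => rfl)

lemma sum_range_leftSeq_succ (R : BoolRel) (r : ℕ) :
    ∑ j ∈ range r, leftSeq R (r + 1) j = ∑ k ∈ Ioc 0 (r : ℤ), ind (R k (r + 1)) := by
  rw [sum_range_leftSeq]
  congr 1
  ext k; simp only [mem_Ico, mem_Ioc]; omega

lemma sum_range_rightSeq_zero (R : BoolRel) (r : ℕ) :
    ∑ j ∈ range r, rightSeq R 0 j = ∑ k ∈ Ioc 0 (r : ℤ), ind (R k 0) := by
  rw [sum_range_rightSeq, zero_add]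

lemma HasDensities.tendsto_left {R : BoolRel} (hR : HasDensities R) (c : ℤ) :
    Tendsto (avg (leftSeq R c)) atTop (𝓝 (leftDensity R c)) :=
  tendsto_nhds_limUnder (hR c).1

lemma HasDensities.tendsto_right {R : BoolRel} (hR : HasDensities R) (c : ℤ) :
    Tendsto (avg (rightSeq R c)) atTop (𝓝 (rightDensity R c)) :=
  tendsto_nhds_limUnder (hR c).2

lemma HasDensities.leftDensity_mem_Icc {R : BoolRel} (hR : HasDensities R) (c : ℤ) :
    leftDensity R c ∈ Set.Icc (0 : ℝ) 1 :=
  isClosed_Icc.mem_of_tendsto (hR.tendsto_left c) (.of_forall (avg_mem_Icc fun _ => ind_mem_Icc _))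

lemma HasDensities.rightDensity_mem_Icc {R : BoolRel} (hR : HasDensities R) (c : ℤ) :
    rightDensity R c ∈ Set.Icc (0 : ℝ) 1 :=
  isClosed_Icc.mem_of_tendsto (hR.tendsto_right c) (.of_forall (avg_mem_Icc fun _ => ind_mem_Icc _))

lemma HasDensities.tendsto_left_comp_add {R : BoolRel} (hR : HasDensities R) (c : ℤ) (δ : ℕ) :
    Tendsto (avg fun j => leftSeq R c (j + δ)) atTop (𝓝 (leftDensity R c)) :=
  (tendsto_avg_comp_add_iff (u := leftSeq R c) (fun _ => abs_ind_le_one _) δ).2 (hR.tendsto_left c)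

lemma HasDensities.tendsto_right_comp_add {R : BoolRel} (hR : HasDensities R) (c : ℤ) (δ : ℕ) :
    Tendsto (avg fun j => rightSeq R c (j + δ)) atTop (𝓝 (rightDensity R c)) :=
  (tendsto_avg_comp_add_iff (u := rightSeq R c) (fun _ => abs_ind_le_one _) δ).2
    (hR.tendsto_right c)

lemma HasDensities.leftDensity_le_of_rel {R : BoolRel} (hd : HasDensities R)
    (hR : IsStrictTotalBool R) {x y : ℤ} (h : R y x) : leftDensity R y ≤ leftDensity R x := by
  refine le_of_tendsto_of_tendsto' (hd.tendsto_left_comp_add y (y - min x y).toNat)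
    (hd.tendsto_left_comp_add x (x - min x y).toNat) fun N => avg_mono (fun j => ?_) N
  rw [leftSeq_add_toNat R (min_le_right x y), leftSeq_add_toNat R (min_le_left x y)]
  exact ind_le_ind fun hk => hR.trans hk h

lemma HasDensities.rightDensity_le_of_rel {R : BoolRel} (hd : HasDensities R)
    (hR : IsStrictTotalBool R) {x y : ℤ} (h : R y x) : rightDensity R y ≤ rightDensity R x := by
  refine le_of_tendsto_of_tendsto' (hd.tendsto_right_comp_add y (max x y - y).toNat)
    (hd.tendsto_right_comp_add x (max x y - x).toNat) fun N => avg_mono (fun j => ?_) N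
  rw [rightSeq_add_toNat R (le_max_right x y), rightSeq_add_toNat R (le_max_left x y)]
  exact ind_le_ind fun hk => hR.trans hk h

lemma monotone_sub_self_of_strictMono {f : ℤ → ℤ} (hf : StrictMono f) :
    Monotone fun k => f k - k :=
  monotone_int_of_le_succ fun n => by have := hf (lt_add_one n); omega

lemma leftSeq_comap_eventuallyEq {f : ℤ → ℤ} (hf : StrictMono f)
    (hbot : ∃ s, ∀ᶠ k in atBot, f k = k + s) (R : BoolRel) (c : ℤ) :
    ∃ δ : ℕ, leftSeq (comap f R) c =ᶠ[atTop] fun j => leftSeq R (f c) (j + δ) := by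
  obtain ⟨s, hs⟩ := hbot
  obtain ⟨K, hK⟩ := eventually_atBot.1 hs
  have hsc : c + s ≤ f c := by
    have := hK (min c K) (min_le_right _ _)
    have : f (min c K) - min c K ≤ f c - c := monotone_sub_self_of_strictMono hf (min_le_left c K)
    omega
  refine ⟨(f c - (c + s)).toNat, eventually_atTop.2 ⟨(c - K).toNat, fun j hj => ?_⟩⟩
  dsimp only
  rw [leftSeq_add_toNat R hsc, leftSeq, comap, hK _ (by omega)]
  congr 2; ring

lemma rightSeq_comap_eventuallyEq {f : ℤ → ℤ} (hf : StrictMono f)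
    (htop : ∃ s, ∀ᶠ k in atTop, f k = k + s) (R : BoolRel) (c : ℤ) :
    ∃ δ : ℕ, rightSeq (comap f R) c =ᶠ[atTop] fun j => rightSeq R (f c) (j + δ) := by
  obtain ⟨s, hs⟩ := htop
  obtain ⟨K, hK⟩ := eventually_atTop.1 hs
  have hcs : f c ≤ c + s := by
    have := hK (max c K) (le_max_right _ _)
    have : f c - c ≤ f (max c K) - max c K := monotone_sub_self_of_strictMono hf (le_max_left c K)
    omega
  refine ⟨(c + s - f c).toNat, eventually_atTop.2 ⟨(K - c).toNat, fun j hj => ?_⟩⟩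
  dsimp only
  rw [rightSeq_add_toNat R hcs, rightSeq, comap, hK _ (by omega)]
  congr 2; ring

lemma HasDensities.leftDensity_comap {R : BoolRel} (hR : HasDensities R) {f : ℤ → ℤ}
    (hf : StrictMono f) (hbot : ∃ s, ∀ᶠ k in atBot, f k = k + s) (c : ℤ) :
    leftDensity (comap f R) c = leftDensity R (f c) := by
  obtain ⟨δ, hδ⟩ := leftSeq_comap_eventuallyEq hf hbot R c
  exact (tendsto_avg_congr hδ (hR.tendsto_left_comp_add (f c) δ)).limUnder_eq

lemma HasDensities.rightDensity_comap {R : BoolRel} (hR : HasDensities R) {f : ℤ → ℤ}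
    (hf : StrictMono f) (htop : ∃ s, ∀ᶠ k in atTop, f k = k + s) (c : ℤ) :
    rightDensity (comap f R) c = rightDensity R (f c) := by
  obtain ⟨δ, hδ⟩ := rightSeq_comap_eventuallyEq hf htop R c
  exact (tendsto_avg_congr hδ (hR.tendsto_right_comp_add (f c) δ)).limUnder_eq

def tripleMap (a b c k : ℤ) : ℤ := if k ≤ 0 then k + a else if k = 1 then b else k - 2 + c

lemma tripleMap_strictMono {a b c : ℤ} (hab : a < b) (hbc : b < c) :
    StrictMono (tripleMap a b c) := fun x y hxy => by
  unfold tripleMap; split_ifs <;> omega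

@[simp] lemma tripleMap_zero (a b c : ℤ) : tripleMap a b c 0 = a := by simp [tripleMap]

@[simp] lemma tripleMap_one (a b c : ℤ) : tripleMap a b c 1 = b := by simp [tripleMap]

@[simp] lemma tripleMap_two (a b c : ℤ) : tripleMap a b c 2 = c := by norm_num [tripleMap]

lemma tripleMap_atBot (a b c : ℤ) : ∃ s, ∀ᶠ k in atBot, tripleMap a b c k = k + s :=
  ⟨a, eventually_atBot.2 ⟨0, fun _ hk => if_pos hk⟩⟩

lemma tripleMap_atTop (a b c : ℤ) : ∃ s, ∀ᶠ k in atTop, tripleMap a b c k = k + s :=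
  ⟨c - 2, eventually_atTop.2 ⟨2, fun k hk => by
    rw [tripleMap, if_neg (by omega), if_neg (by omega)]; ring⟩⟩

lemma measurable_comap (f : ℤ → ℤ) : Measurable (comap f) :=
  measurable_pi_lambda _ fun m => measurable_pi_lambda _ fun n =>
    (measurable_pi_apply (f n)).comp (measurable_pi_apply (f m))

/-- For `x < y` these are the two ways in which ties `X_x = X_y`, `Y_x = Y_y` can violate the
rule that `x ⊲ y` exactly when `Y_x < X_x`. -/
def badUp (x y : ℤ) : Set BoolRel :=
  {R | R x y ∧ leftDensity R x = leftDensity R y ∧ rightDensity R x = rightDensity R y ∧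
    leftDensity R x ≤ rightDensity R x}

def badDown (x y : ℤ) : Set BoolRel :=
  {R | R y x ∧ leftDensity R x = leftDensity R y ∧ rightDensity R x = rightDensity R y ∧
    rightDensity R x < leftDensity R x}

lemma measurableSet_setOf_rel (x y : ℤ) : MeasurableSet {R : BoolRel | R x y} :=
  ((measurable_pi_apply y).comp (measurable_pi_apply x) : Measurable fun R : BoolRel => R x y)
    (measurableSet_singleton true)

lemma measurableSet_badUp (x y : ℤ) : MeasurableSet (badUp x y) :=
  (measurableSet_setOf_rel x y).inter <|
    (measurableSet_eq_fun (measurable_leftDensity x) (measurable_leftDensity y)).inter <|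
    (measurableSet_eq_fun (measurable_rightDensity x) (measurable_rightDensity y)).inter
      (measurableSet_le (measurable_leftDensity x) (measurable_rightDensity x))

lemma measurableSet_badDown (x y : ℤ) : MeasurableSet (badDown x y) :=
  (measurableSet_setOf_rel y x).inter <|
    (measurableSet_eq_fun (measurable_leftDensity x) (measurable_leftDensity y)).inter <|
    (measurableSet_eq_fun (measurable_rightDensity x) (measurable_rightDensity y)).inter
      (measurableSet_lt (measurable_rightDensity x) (measurable_leftDensity x))

lemma HasDensities.comap_mem_badUp_iff {R : BoolRel} (hR : HasDensities R) {f : ℤ → ℤ}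
    (hf : StrictMono f) (hbot : ∃ s, ∀ᶠ k in atBot, f k = k + s)
    (htop : ∃ s, ∀ᶠ k in atTop, f k = k + s) (x y : ℤ) :
    comap f R ∈ badUp x y ↔ R ∈ badUp (f x) (f y) := by
  simp only [badUp, Set.mem_ofPred_eq, hR.leftDensity_comap hf hbot, hR.rightDensity_comap hf htop]
  rfl

lemma HasDensities.comap_mem_badDown_iff {R : BoolRel} (hR : HasDensities R) {f : ℤ → ℤ}
    (hf : StrictMono f) (hbot : ∃ s, ∀ᶠ k in atBot, f k = k + s)
    (htop : ∃ s, ∀ᶠ k in atTop, f k = k + s) (x y : ℤ) :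
    comap f R ∈ badDown x y ↔ R ∈ badDown (f x) (f y) := by
  simp only [badDown, Set.mem_ofPred_eq, hR.leftDensity_comap hf hbot,
    hR.rightDensity_comap hf htop]
  rfl

lemma mem_badUp_trans {R : BoolRel} (hR : IsStrictTotalBool R) {x y z : ℤ}
    (h₁ : R ∈ badUp x y) (h₂ : R ∈ badUp y z) : R ∈ badUp x z :=
  ⟨hR.trans h₁.1 h₂.1, h₁.2.1.trans h₂.2.1, h₁.2.2.1.trans h₂.2.2.1, h₁.2.2.2⟩

lemma mem_badUp_of_mem_badUp_of_rel {R : BoolRel} {x y z : ℤ} (h₁ : R ∈ badUp z x)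
    (h₂ : R ∈ badUp z y) (hxy : R x y) : R ∈ badUp x y :=
  ⟨hxy, h₁.2.1.symm.trans h₂.2.1, h₁.2.2.1.symm.trans h₂.2.2.1, by
    rw [← h₁.2.1, ← h₁.2.2.1]; exact h₁.2.2.2⟩

lemma indicator_one_mem_Icc (S : Set BoolRel) (R : BoolRel) :
    S.indicator (1 : BoolRel → ℝ) R ∈ Set.Icc (0 : ℝ) 1 :=
  ⟨Set.indicator_nonneg (fun _ _ => zero_le_one) R,
    Set.indicator_apply_le' (fun _ => le_rfl) fun _ => zero_le_one⟩

lemma indicator_comap_of_mem_iff {R : BoolRel} {f : ℤ → ℤ} {S S' : Set BoolRel}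
    {g g' : BoolRel → ℝ} (hS : comap f R ∈ S ↔ R ∈ S') (hg : g (comap f R) = g' R) :
    S.indicator g (comap f R) = S'.indicator g' R := by
  by_cases h : R ∈ S'
  · rw [Set.indicator_of_mem (hS.2 h), Set.indicator_of_mem h, hg]
  · rw [Set.indicator_of_notMem (mt hS.1 h), Set.indicator_of_notMem h]

noncomputable def leftErr (R : BoolRel) (c : ℤ) (N : ℕ) : ℝ :=
  |avg (leftSeq R c) N - leftDensity R c|

noncomputable def rightErr (R : BoolRel) (c : ℤ) (N : ℕ) : ℝ :=
  |avg (rightSeq R c) N - rightDensity R c|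

lemma measurable_leftErr (c : ℤ) (N : ℕ) : Measurable fun R => leftErr R c N :=
  ((measurable_avg (A := fun j R => leftSeq R c j) (fun _ => measurable_ind_apply _ _) N).sub
    (measurable_leftDensity c)).abs

lemma measurable_rightErr (c : ℤ) (N : ℕ) : Measurable fun R => rightErr R c N :=
  ((measurable_avg (A := fun j R => rightSeq R c j) (fun _ => measurable_ind_apply _ _) N).sub
    (measurable_rightDensity c)).abs

lemma leftErr_nonneg (R : BoolRel) (c : ℤ) (N : ℕ) : 0 ≤ leftErr R c N := abs_nonneg _

lemma rightErr_nonneg (R : BoolRel) (c : ℤ) (N : ℕ) : 0 ≤ rightErr R c N := abs_nonneg _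

lemma HasDensities.leftErr_le_one {R : BoolRel} (hR : HasDensities R) (c : ℤ) (N : ℕ) :
    leftErr R c N ≤ 1 := by
  have h₁ := avg_mem_Icc (u := leftSeq R c) (fun _ => ind_mem_Icc _) N
  have h₂ := hR.leftDensity_mem_Icc c
  rw [leftErr, abs_le]
  constructor <;> linarith [h₁.1, h₁.2, h₂.1, h₂.2]

lemma HasDensities.rightErr_le_one {R : BoolRel} (hR : HasDensities R) (c : ℤ) (N : ℕ) :
    rightErr R c N ≤ 1 := by
  have h₁ := avg_mem_Icc (u := rightSeq R c) (fun _ => ind_mem_Icc _) N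
  have h₂ := hR.rightDensity_mem_Icc c
  rw [rightErr, abs_le]
  constructor <;> linarith [h₁.1, h₁.2, h₂.1, h₂.2]

lemma leftErr_comap_add (R : BoolRel) (c s : ℤ) (N : ℕ) :
    leftErr (comap (· + s) R) c N = leftErr R (c + s) N := by
  have h : leftSeq (comap (· + s) R) c = leftSeq R (c + s) := by
    funext j; simp only [leftSeq, comap]; congr 2; ring
  simp only [leftErr, leftDensity, h]

noncomputable def windowErr (R : BoolRel) (r : ℕ) : ℝ := leftErr R (r + 1) r + rightErr R 0 r

lemma windowErr_nonneg (R : BoolRel) (r : ℕ) : 0 ≤ windowErr R r :=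
  add_nonneg (abs_nonneg _) (abs_nonneg _)

lemma abs_avg_sub_avg_sub_le_windowErr (R : BoolRel) (r : ℕ) :
    |(avg (leftSeq R (r + 1)) r - avg (rightSeq R 0) r) -
      (leftDensity R (r + 1) - rightDensity R 0)| ≤ windowErr R r := by
  rw [windowErr, leftErr, rightErr]
  calc _ = |(avg (leftSeq R (r + 1)) r - leftDensity R (r + 1)) -
        (avg (rightSeq R 0) r - rightDensity R 0)| := by ring_nf
    _ ≤ _ := abs_sub _ _

noncomputable def badDownGap (x y : ℤ) : BoolRel → ℝ :=
  (badDown x y).indicator fun R => leftDensity R x - rightDensity R x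

lemma badDownGap_nonneg (x y : ℤ) (R : BoolRel) : 0 ≤ badDownGap x y R :=
  Set.indicator_nonneg (fun _ hR => sub_nonneg.2 hR.2.2.2.le) R

lemma measurable_sub_density (x : ℤ) :
    Measurable fun R => leftDensity R x - rightDensity R x :=
  (measurable_leftDensity x).sub (measurable_rightDensity x)

lemma badDownGap_le_windowErr {R : BoolRel} (hR : IsStrictTotalBool R) (r : ℕ) :
    badDownGap 0 (r + 1) R ≤ windowErr R r := by
  by_cases hmem : R ∈ badDown 0 (r + 1)
  · rw [badDownGap, Set.indicator_of_mem hmem, hmem.2.1]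
    have hsum : ∑ j ∈ range r, leftSeq R (r + 1) j ≤ ∑ j ∈ range r, rightSeq R 0 j := by
      rw [sum_range_leftSeq_succ, sum_range_rightSeq_zero]
      exact sum_le_sum fun k _ => ind_le_ind fun hk => hR.trans hk hmem.1
    have havg : avg (leftSeq R (r + 1)) r ≤ avg (rightSeq R 0) r :=
      mul_le_mul_of_nonneg_left hsum (by positivity)
    linarith [(abs_le.1 (abs_avg_sub_avg_sub_le_windowErr R r)).1]
  · rw [badDownGap, Set.indicator_of_notMem hmem]
    exact windowErr_nonneg R r

lemma indicator_badUp_inter_le {R : BoolRel} (hR : IsStrictTotalBool R) (k n : ℤ) :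
    (badUp 0 k ∩ badUp k n).indicator 1 R ≤
      (badUp 0 n).indicator 1 R * (ind (R k n) - ind (R k 0)) := by
  by_cases h : R ∈ badUp 0 k ∩ badUp k n
  · rw [Set.indicator_of_mem h, Set.indicator_of_mem (mem_badUp_trans hR h.1 h.2)]
    simp [ind, h.2.1, hR.asymm h.1.1]
  · rw [Set.indicator_of_notMem h]
    by_cases h' : R ∈ badUp 0 n
    · rw [Set.indicator_of_mem h', Pi.one_apply, one_mul, sub_nonneg]
      exact ind_le_ind fun hk => hR.trans hk h'.1
    · rw [Set.indicator_of_notMem h', zero_mul]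

lemma sum_indicator_badUp_inter_le {R : BoolRel} (hR : IsStrictTotalBool R) (r : ℕ) :
    ∑ k ∈ Ioc 0 (r : ℤ), (badUp 0 k ∩ badUp k (r + 1)).indicator 1 R ≤ r * windowErr R r := by
  calc ∑ k ∈ Ioc 0 (r : ℤ), (badUp 0 k ∩ badUp k (r + 1)).indicator 1 R
      ≤ (badUp 0 (r + 1)).indicator 1 R *
          (r * (avg (leftSeq R (r + 1)) r - avg (rightSeq R 0) r)) := by
        rw [mul_sub, natCast_mul_avg, natCast_mul_avg, sum_range_leftSeq_succ,
          sum_range_rightSeq_zero, ← sum_sub_distrib, mul_sum]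
        exact sum_le_sum fun k _ => indicator_badUp_inter_le hR k _
    _ ≤ r * windowErr R r := by
        by_cases hmem : R ∈ badUp 0 (r + 1)
        · rw [Set.indicator_of_mem hmem, Pi.one_apply, one_mul]
          refine mul_le_mul_of_nonneg_left ?_ (by positivity)
          have : leftDensity R (r + 1) ≤ rightDensity R 0 := hmem.2.1 ▸ hmem.2.2.2
          linarith [(abs_le.1 (abs_avg_sub_avg_sub_le_windowErr R r)).2]
        · rw [Set.indicator_of_notMem hmem, zero_mul]
          exact mul_nonneg (by positivity) (windowErr_nonneg R r)

lemma indicator_badUp_le_of_mem_badUp {R : BoolRel} (hR : IsStrictTotalBool R)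
    (hchain : ∀ a b, 0 < a → a < b → R ∉ badUp 0 a ∩ badUp a b) {c : ℤ} (hc : 0 < c)
    (hcU : R ∈ badUp 0 c) (j : ℕ) :
    (badUp 0 (j + 1)).indicator 1 R ≤
      ind (R (j + 1) c) - rightSeq R 0 j + if j < c.toNat then 1 else 0 := by
  have hwu : rightSeq R 0 j ≤ ind (R (j + 1) c) := by
    simp only [rightSeq, zero_add]
    exact ind_le_ind fun h => hR.trans h hcU.1
  have h₁ := (indicator_one_mem_Icc (badUp 0 (j + 1)) R).2
  by_cases hj : j < c.toNat
  · rw [if_pos hj]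
    linarith
  by_cases hmem : R ∈ badUp 0 (j + 1)
  · -- beyond `c`, chain-freeness turns the bad pair `(0, j + 1)` into `j + 1 ⊲ c`
    have hnot : ¬R c (j + 1) := fun h =>
      hchain c (j + 1) hc (by omega) ⟨hcU, mem_badUp_of_mem_badUp_of_rel hcU hmem h⟩
    have hjc : R (j + 1) c := hR.rel_of_not_rel (by omega) hnot
    have hj0 : ¬R (j + 1) 0 := hR.asymm hmem.1
    simp [Set.indicator_of_mem hmem, hj, rightSeq, ind, hjc, hj0]
  · rw [Set.indicator_of_notMem hmem, if_neg hj]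
    linarith

lemma HasDensities.tendsto_avg_indicator_badUp {R : BoolRel} (hd : HasDensities R)
    (hR : IsStrictTotalBool R) (hchain : ∀ a b, 0 < a → a < b → R ∉ badUp 0 a ∩ badUp a b) :
    Tendsto (avg fun j => (badUp 0 (j + 1)).indicator 1 R) atTop (𝓝 0) := by
  by_cases hex : ∃ c, 0 < c ∧ R ∈ badUp 0 c
  swap
  · push Not at hex
    have hA : (fun j : ℕ => (badUp 0 (j + 1)).indicator (1 : BoolRel → ℝ) R) = fun _ => 0 :=
      funext fun j => Set.indicator_of_notMem (hex _ (by omega)) _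
    rw [hA]
    exact tendsto_const_nhds.congr fun N => by simp [avg]
  obtain ⟨c, hc, hcU⟩ := hex
  set w : ℕ → ℝ := fun j => ind (R (j + 1) c)
  set e : ℕ → ℝ := fun j => if j < c.toNat then 1 else 0
  have hw : Tendsto (avg w) atTop (𝓝 (rightDensity R c)) := by
    refine (tendsto_avg_comp_add_iff (fun _ => abs_ind_le_one _) c.toNat).1 ?_
    convert hd.tendsto_right c using 3 with j
    simp only [rightSeq]; congr 2; push_cast; omega
  have he : Tendsto (avg e) atTop (𝓝 0) :=
    Tendsto.cesaro (tendsto_const_nhds.congr' (eventually_atTop.2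
      ⟨c.toNat, fun j hj => (if_neg (by omega)).symm⟩))
  have hupper : Tendsto (avg (w - rightSeq R 0 + e)) atTop (𝓝 0) := by
    have := (hw.sub (hd.tendsto_right 0)).add he
    rw [← hcU.2.2.1, sub_self, add_zero] at this
    exact this.congr fun N => by rw [avg_add, avg_sub]
  exact tendsto_of_tendsto_of_tendsto_of_le_of_le tendsto_const_nhds hupper
    (fun N => (avg_mem_Icc (fun j => indicator_one_mem_Icc _ R) N).1)
    (fun N => avg_mono (indicator_badUp_le_of_mem_badUp hR hchain hc hcU) N)

lemma HasDensities.tendsto_sum_Icc_left {R : BoolRel} (hR : HasDensities R) (n : ℤ) :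
    Tendsto (fun N : ℕ => (N : ℝ)⁻¹ * ∑ k ∈ Icc (-(N : ℤ)) n, ind (R k n)) atTop
      (𝓝 (leftDensity R n)) := by
  refine tendsto_inv_mul_of_abs_sub_le (1 + |(n : ℝ)|)
    (eventually_atTop.2 ⟨(-n).toNat, fun N hN => ?_⟩) (hR.tendsto_left n)
  have hM : (((n + N).toNat : ℕ) : ℝ) = n + N := by
    exact_mod_cast Int.toNat_of_nonneg (by omega : 0 ≤ n + N)
  rw [← Ico_insert_right (by omega : -(N : ℤ) ≤ n), sum_insert right_notMem_Ico,
    show -(N : ℤ) = n - (n + N).toNat by omega, ← sum_range_leftSeq, add_sub_assoc]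
  refine (abs_add_le _ _).trans (add_le_add (abs_ind_le_one _) ?_)
  refine (abs_sum_range_sub_sum_range_le (fun _ => abs_ind_le_one _) _ _).trans_eq ?_
  rw [hM, add_sub_cancel_right]

lemma HasDensities.tendsto_sum_Icc_right {R : BoolRel} (hR : HasDensities R) (n : ℤ) :
    Tendsto (fun N : ℕ => (N : ℝ)⁻¹ * ∑ k ∈ Icc n (N : ℤ), ind (R k n)) atTop
      (𝓝 (rightDensity R n)) := by
  refine tendsto_inv_mul_of_abs_sub_le (1 + |(n : ℝ)|)
    (eventually_atTop.2 ⟨n.toNat, fun N hN => ?_⟩) (hR.tendsto_right n)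
  have hM : ((((N : ℤ) - n).toNat : ℕ) : ℝ) = N - n := by
    exact_mod_cast Int.toNat_of_nonneg (by omega : 0 ≤ (N : ℤ) - n)
  rw [← Ioc_insert_left (by omega : n ≤ (N : ℤ)), sum_insert left_notMem_Ioc,
    show (N : ℤ) = n + ((N : ℤ) - n).toNat by omega, ← sum_range_rightSeq, add_sub_assoc]
  refine (abs_add_le _ _).trans (add_le_add (abs_ind_le_one _) ?_)
  refine (abs_sum_range_sub_sum_range_le (fun _ => abs_ind_le_one _) _ _).trans_eq ?_
  rw [hM, sub_sub_cancel_left, abs_neg]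

theorem HasDensities.rel_iff {R : BoolRel} (hd : HasDensities R) (hR : IsStrictTotalBool R)
    {m n : ℤ} (hmn : m < n) (hup : R ∉ badUp m n) (hdown : R ∉ badDown m n) :
    R m n = true ↔ leftDensity R m < leftDensity R n ∨ rightDensity R m < rightDensity R n ∨
      (leftDensity R m = leftDensity R n ∧ rightDensity R m = rightDensity R n ∧
        rightDensity R m < leftDensity R m) := by
  constructor
  · intro h
    rcases (hd.leftDensity_le_of_rel hR h).lt_or_eq with hX | hX
    · exact Or.inl hX
    rcases (hd.rightDensity_le_of_rel hR h).lt_or_eq with hY | hY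
    · exact Or.inr (Or.inl hY)
    exact Or.inr (Or.inr ⟨hX, hY, not_le.1 fun hle => hup ⟨h, hX, hY, hle⟩⟩)
  · intro h
    by_contra hnm
    have hnm' := hR.rel_of_not_rel hmn.ne hnm
    rcases h with hX | hY | ⟨hX, hY, hYX⟩
    · exact (hd.leftDensity_le_of_rel hR hnm').not_gt hX
    · exact (hd.rightDensity_le_of_rel hR hnm').not_gt hY
    · exact hdown ⟨hnm', hX, hY, hYX⟩

def IsIInvariant {Ω : Type*} [MeasurableSpace Ω] (P : Measure Ω) (T : Ω → BoolRel) : Prop :=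
  ∀ f : ℤ → ℤ, StrictMono f → P.map (fun ω => comap f (T ω)) = P.map T

lemma integral_comp_comap {Ω : Type*} [MeasurableSpace Ω] {P : Measure Ω} {T : Ω → BoolRel}
    (hmeas : Measurable T) (hinv : IsIInvariant P T) {f : ℤ → ℤ}
    (hf : StrictMono f) {G : BoolRel → ℝ} (hG : Measurable G) :
    ∫ ω, G (comap f (T ω)) ∂P = ∫ ω, G (T ω) ∂P := by
  have hcomap : Measurable fun ω => comap f (T ω) := (measurable_comap f).comp hmeas
  rw [← integral_map hcomap.aemeasurable hG.aestronglyMeasurable,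
    ← integral_map hmeas.aemeasurable hG.aestronglyMeasurable, hinv f hf]

section Invariance

variable {Ω : Type*} [MeasurableSpace Ω] {P : Measure Ω} [IsProbabilityMeasure P]
  {T : Ω → BoolRel}

lemma ae_exists_tendsto_avg_leftSeq (hmeas : Measurable T) (hinv : IsIInvariant P T) (c : ℤ) :
    ∀ᵐ ω ∂P, ∃ L, Tendsto (avg (leftSeq (T ω) c)) atTop (𝓝 L) := by
  refine ae_exists_tendsto_avg_of_integral_mul (A := fun j ω => leftSeq (T ω) c j)
    (fun _ => (measurable_ind_apply _ _).comp hmeas) (fun _ _ => ind_mem_Icc _)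
    (q := ∫ ω, ind (T ω 1 2) * ind (T ω 1 2) ∂P) (c := ∫ ω, ind (T ω 0 2) * ind (T ω 1 2) ∂P)
    (fun i => ?_) (fun i j hij => ?_)
  · rw [← integral_comp_comap hmeas hinv (tripleMap_strictMono
      (show c - (i + 1) - 1 < c - (i + 1) by omega) (show c - (i + 1) < c by omega))
      (G := fun R => ind (R 1 2) * ind (R 1 2))
      ((measurable_ind_apply 1 2).mul (measurable_ind_apply 1 2))]
    simp [comap, leftSeq]
  · rw [← integral_comp_comap hmeas hinv (tripleMap_strictMono
      (show c - (j + 1) < c - (i + 1) by omega) (show c - (i + 1) < c by omega))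
      (G := fun R => ind (R 0 2) * ind (R 1 2))
      ((measurable_ind_apply 0 2).mul (measurable_ind_apply 1 2))]
    simp [comap, leftSeq, mul_comm]

lemma ae_exists_tendsto_avg_rightSeq (hmeas : Measurable T) (hinv : IsIInvariant P T) (c : ℤ) :
    ∀ᵐ ω ∂P, ∃ L, Tendsto (avg (rightSeq (T ω) c)) atTop (𝓝 L) := by
  refine ae_exists_tendsto_avg_of_integral_mul (A := fun j ω => rightSeq (T ω) c j)
    (fun _ => (measurable_ind_apply _ _).comp hmeas) (fun _ _ => ind_mem_Icc _)
    (q := ∫ ω, ind (T ω 2 1) * ind (T ω 2 1) ∂P) (c := ∫ ω, ind (T ω 1 0) * ind (T ω 2 0) ∂P)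
    (fun i => ?_) (fun i j hij => ?_)
  · rw [← integral_comp_comap hmeas hinv (tripleMap_strictMono
      (show c - 1 < c by omega) (show c < c + (i + 1) by omega))
      (G := fun R => ind (R 2 1) * ind (R 2 1))
      ((measurable_ind_apply 2 1).mul (measurable_ind_apply 2 1))]
    simp [comap, rightSeq]
  · rw [← integral_comp_comap hmeas hinv (tripleMap_strictMono
      (show c < c + (i + 1) by omega) (show c + (i + 1) < c + (j + 1) by omega))
      (G := fun R => ind (R 1 0) * ind (R 2 0))
      ((measurable_ind_apply 1 0).mul (measurable_ind_apply 2 0))]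
    simp [comap, rightSeq]

theorem ae_hasDensities (hmeas : Measurable T) (hinv : IsIInvariant P T) :
    ∀ᵐ ω ∂P, HasDensities (T ω) :=
  ae_all_iff.2 fun c =>
    (ae_exists_tendsto_avg_leftSeq hmeas hinv c).and (ae_exists_tendsto_avg_rightSeq hmeas hinv c)

lemma integral_eq_of_equivariant (hmeas : Measurable T) (hinv : IsIInvariant P T)
    {G : ℤ → ℤ → ℤ → BoolRel → ℝ} (hGm : Measurable (G 0 1 2))
    (hG : ∀ f : ℤ → ℤ, StrictMono f → (∃ s, ∀ᶠ k in atBot, f k = k + s) →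
      (∃ s, ∀ᶠ k in atTop, f k = k + s) → ∀ R, HasDensities R →
        ∀ x y z, G x y z (comap f R) = G (f x) (f y) (f z) R)
    {x y z : ℤ} (hxy : x < y) (hyz : y < z) :
    ∫ ω, G x y z (T ω) ∂P = ∫ ω, G 0 1 2 (T ω) ∂P := by
  rw [← integral_comp_comap hmeas hinv (tripleMap_strictMono hxy hyz) hGm]
  refine integral_congr_ae ?_
  filter_upwards [ae_hasDensities hmeas hinv] with ω hω
  rw [hG _ (tripleMap_strictMono hxy hyz) (tripleMap_atBot x y z) (tripleMap_atTop x y z) _ hω,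
    tripleMap_zero, tripleMap_one, tripleMap_two]

lemma integral_eq_of_equivariant₂ (hmeas : Measurable T) (hinv : IsIInvariant P T)
    {G : ℤ → ℤ → BoolRel → ℝ} (hGm : Measurable (G 1 2))
    (hG : ∀ f : ℤ → ℤ, StrictMono f → (∃ s, ∀ᶠ k in atBot, f k = k + s) →
      (∃ s, ∀ᶠ k in atTop, f k = k + s) → ∀ R, HasDensities R →
        ∀ x y, G x y (comap f R) = G (f x) (f y) R)
    {x y : ℤ} (hxy : x < y) : ∫ ω, G x y (T ω) ∂P = ∫ ω, G 1 2 (T ω) ∂P :=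
  integral_eq_of_equivariant (G := fun _ y z => G y z) hmeas hinv hGm
    (fun f hf hbot htop R hR _ y z => hG f hf hbot htop R hR y z) (sub_one_lt x) hxy

lemma ae_notMem_of_integral_indicator_eq_zero (hmeas : Measurable T) {S : Set BoolRel}
    (hS : MeasurableSet S) {g : BoolRel → ℝ} (hgm : Measurable g) (hg : ∀ R ∈ S, 0 < g R)
    (hbound : ∀ᵐ ω ∂P, S.indicator g (T ω) ≤ 1) (h : ∫ ω, S.indicator g (T ω) ∂P = 0) :
    ∀ᵐ ω ∂P, T ω ∉ S := by
  have hnonneg : ∀ R, 0 ≤ S.indicator g R := Set.indicator_nonneg fun R hR => (hg R hR).le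
  have hint : Integrable (fun ω => S.indicator g (T ω)) P :=
    .of_bound ((hgm.indicator hS).comp hmeas).aestronglyMeasurable 1 <| by
      filter_upwards [hbound] with ω hω
      rwa [Real.norm_of_nonneg (hnonneg _)]
  filter_upwards [(integral_eq_zero_iff_of_nonneg (fun ω => hnonneg (T ω)) hint).1 h]
    with ω hω hmem
  exact (hg _ hmem).ne' (by simpa [Set.indicator_of_mem hmem] using hω)

lemma ae_norm_leftErr_le_one (hmeas : Measurable T) (hinv : IsIInvariant P T) (c : ℤ) (N : ℕ) :
    ∀ᵐ ω ∂P, ‖leftErr (T ω) c N‖ ≤ 1 := by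
  filter_upwards [ae_hasDensities hmeas hinv] with ω hω
  rw [Real.norm_of_nonneg (leftErr_nonneg _ c N)]
  exact hω.leftErr_le_one c N

lemma ae_norm_rightErr_le_one (hmeas : Measurable T) (hinv : IsIInvariant P T) (c : ℤ)
    (N : ℕ) : ∀ᵐ ω ∂P, ‖rightErr (T ω) c N‖ ≤ 1 := by
  filter_upwards [ae_hasDensities hmeas hinv] with ω hω
  rw [Real.norm_of_nonneg (rightErr_nonneg _ c N)]
  exact hω.rightErr_le_one c N

lemma integrable_leftErr (hmeas : Measurable T) (hinv : IsIInvariant P T) (c : ℤ) (N : ℕ) :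
    Integrable (fun ω => leftErr (T ω) c N) P :=
  .of_bound ((measurable_leftErr c N).comp hmeas).aestronglyMeasurable 1
    (ae_norm_leftErr_le_one hmeas hinv c N)

lemma integrable_rightErr (hmeas : Measurable T) (hinv : IsIInvariant P T) (c : ℤ) (N : ℕ) :
    Integrable (fun ω => rightErr (T ω) c N) P :=
  .of_bound ((measurable_rightErr c N).comp hmeas).aestronglyMeasurable 1
    (ae_norm_rightErr_le_one hmeas hinv c N)

lemma tendsto_integral_leftErr (hmeas : Measurable T) (hinv : IsIInvariant P T) (c : ℤ) :
    Tendsto (fun N => ∫ ω, leftErr (T ω) c N ∂P) atTop (𝓝 0) := by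
  simpa using tendsto_integral_of_dominated_convergence (F := fun N ω => leftErr (T ω) c N)
    (f := fun _ => 0) (fun _ => 1)
    (fun N => ((measurable_leftErr c N).comp hmeas).aestronglyMeasurable) (integrable_const 1)
    (ae_norm_leftErr_le_one hmeas hinv c) (by
      filter_upwards [ae_hasDensities hmeas hinv] with ω hω
      simpa [leftErr] using ((hω.tendsto_left c).sub_const (leftDensity (T ω) c)).abs)

lemma tendsto_integral_rightErr (hmeas : Measurable T) (hinv : IsIInvariant P T) (c : ℤ) :
    Tendsto (fun N => ∫ ω, rightErr (T ω) c N ∂P) atTop (𝓝 0) := by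
  simpa using tendsto_integral_of_dominated_convergence (F := fun N ω => rightErr (T ω) c N)
    (f := fun _ => 0) (fun _ => 1)
    (fun N => ((measurable_rightErr c N).comp hmeas).aestronglyMeasurable) (integrable_const 1)
    (ae_norm_rightErr_le_one hmeas hinv c) (by
      filter_upwards [ae_hasDensities hmeas hinv] with ω hω
      simpa [rightErr] using ((hω.tendsto_right c).sub_const (rightDensity (T ω) c)).abs)

end Invariance

section BadEvents

variable {Ω : Type*} [MeasurableSpace Ω] {P : Measure Ω} [IsProbabilityMeasure P]
  {T : Ω → BoolRel}

lemma integrable_indicator_one (hmeas : Measurable T) {S : Set BoolRel} (hS : MeasurableSet S) :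
    Integrable (fun ω => S.indicator (1 : BoolRel → ℝ) (T ω)) P :=
  .of_bound ((measurable_one.indicator hS).comp hmeas).aestronglyMeasurable 1
    (.of_forall fun ω => by
      rw [Real.norm_of_nonneg (indicator_one_mem_Icc _ _).1]
      exact (indicator_one_mem_Icc _ _).2)

lemma integrable_windowErr (hmeas : Measurable T) (hinv : IsIInvariant P T) (r : ℕ) :
    Integrable (fun ω => windowErr (T ω) r) P :=
  (integrable_leftErr hmeas hinv _ r).add (integrable_rightErr hmeas hinv 0 r)

lemma tendsto_integral_windowErr (hmeas : Measurable T) (hinv : IsIInvariant P T) :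
    Tendsto (fun r : ℕ => ∫ ω, windowErr (T ω) r ∂P) atTop (𝓝 0) := by
  have hshift : ∀ r : ℕ, ∫ ω, leftErr (T ω) (r + 1) r ∂P = ∫ ω, leftErr (T ω) 1 r ∂P := by
    intro r
    rw [← integral_comp_comap hmeas hinv (f := (· + (r : ℤ))) (fun _ _ h => by simpa using h)
      (measurable_leftErr 1 r)]
    simp only [leftErr_comap_add, add_comm (1 : ℤ)]
  have hsplit : ∀ r : ℕ, ∫ ω, windowErr (T ω) r ∂P =
      ∫ ω, leftErr (T ω) 1 r ∂P + ∫ ω, rightErr (T ω) 0 r ∂P := fun r =>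
    (integral_add (integrable_leftErr hmeas hinv _ r) (integrable_rightErr hmeas hinv 0 r)).trans
      (by rw [hshift])
  simpa [hsplit] using
    (tendsto_integral_leftErr hmeas hinv 1).add (tendsto_integral_rightErr hmeas hinv 0)

lemma integral_badDownGap_eq (hmeas : Measurable T) (hinv : IsIInvariant P T) {x y : ℤ}
    (hxy : x < y) : ∫ ω, badDownGap x y (T ω) ∂P = ∫ ω, badDownGap 1 2 (T ω) ∂P :=
  integral_eq_of_equivariant₂ hmeas hinv (G := badDownGap)
    ((measurable_sub_density 1).indicator (measurableSet_badDown 1 2))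
    (fun _ hf hbot htop _ hR x y => indicator_comap_of_mem_iff
      (hR.comap_mem_badDown_iff hf hbot htop x y)
      (by rw [hR.leftDensity_comap hf hbot, hR.rightDensity_comap hf htop])) hxy

lemma integral_badDownGap_eq_zero (hmeas : Measurable T) (hSTO : ∀ ω, IsStrictTotalBool (T ω))
    (hinv : IsIInvariant P T) : ∫ ω, badDownGap 1 2 (T ω) ∂P = 0 := by
  refine le_antisymm (ge_of_tendsto (tendsto_integral_windowErr hmeas hinv)
    (.of_forall fun r => ?_)) (integral_nonneg fun ω => badDownGap_nonneg 1 2 (T ω))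
  rw [← integral_badDownGap_eq hmeas hinv (show (0 : ℤ) < r + 1 by omega)]
  exact integral_mono_of_nonneg (.of_forall fun ω => badDownGap_nonneg _ _ _)
    (integrable_windowErr hmeas hinv r) (.of_forall fun ω => badDownGap_le_windowErr (hSTO ω) r)

theorem ae_notMem_badDown (hmeas : Measurable T) (hSTO : ∀ ω, IsStrictTotalBool (T ω))
    (hinv : IsIInvariant P T) : ∀ᵐ ω ∂P, ∀ x y, x < y → T ω ∉ badDown x y := by
  simp only [ae_all_iff, eventually_imp_distrib_left]
  intro x y hxy
  refine ae_notMem_of_integral_indicator_eq_zero hmeas (measurableSet_badDown x y)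
    (measurable_sub_density x) (fun R hR => sub_pos.2 hR.2.2.2) ?_
    ((integral_badDownGap_eq hmeas hinv hxy).trans (integral_badDownGap_eq_zero hmeas hSTO hinv))
  filter_upwards [ae_hasDensities hmeas hinv] with ω hω
  refine Set.indicator_apply_le' (fun _ => ?_) fun _ => zero_le_one
  linarith [(hω.leftDensity_mem_Icc x).2, (hω.rightDensity_mem_Icc x).1]

lemma integral_indicator_badUp_inter_eq (hmeas : Measurable T) (hinv : IsIInvariant P T)
    {x y z : ℤ} (hxy : x < y) (hyz : y < z) :
    ∫ ω, (badUp x y ∩ badUp y z).indicator (1 : BoolRel → ℝ) (T ω) ∂P =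
      ∫ ω, (badUp 0 1 ∩ badUp 1 2).indicator (1 : BoolRel → ℝ) (T ω) ∂P :=
  integral_eq_of_equivariant hmeas hinv (G := fun x y z => (badUp x y ∩ badUp y z).indicator 1)
    (measurable_one.indicator ((measurableSet_badUp 0 1).inter (measurableSet_badUp 1 2)))
    (fun _ hf hbot htop _ hR x y z => indicator_comap_of_mem_iff
      (by simp only [Set.mem_inter_iff, hR.comap_mem_badUp_iff hf hbot htop]) rfl) hxy hyz

lemma integral_indicator_badUp_inter_eq_zero (hmeas : Measurable T)
    (hSTO : ∀ ω, IsStrictTotalBool (T ω)) (hinv : IsIInvariant P T) :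
    ∫ ω, (badUp 0 1 ∩ badUp 1 2).indicator (1 : BoolRel → ℝ) (T ω) ∂P = 0 := by
  refine le_antisymm (ge_of_tendsto (tendsto_integral_windowErr hmeas hinv)
    (eventually_atTop.2 ⟨1, fun r hr => ?_⟩))
    (integral_nonneg fun ω => (indicator_one_mem_Icc _ _).1)
  have hsum : ∫ ω, ∑ k ∈ Ioc 0 (r : ℤ),
      (badUp 0 k ∩ badUp k (r + 1)).indicator (1 : BoolRel → ℝ) (T ω) ∂P =
        r * ∫ ω, (badUp 0 1 ∩ badUp 1 2).indicator (1 : BoolRel → ℝ) (T ω) ∂P := by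
    rw [integral_finsetSum _ fun k _ => integrable_indicator_one hmeas
        ((measurableSet_badUp _ _).inter (measurableSet_badUp _ _)),
      sum_congr rfl fun k hk => integral_indicator_badUp_inter_eq hmeas hinv (mem_Ioc.1 hk).1
        (by linarith [(mem_Ioc.1 hk).2]),
      sum_const, Int.card_Ioc, sub_zero, Int.toNat_natCast, nsmul_eq_mul]
  have hle := integral_mono_of_nonneg
    (.of_forall fun ω => sum_nonneg fun k _ => (indicator_one_mem_Icc _ (T ω)).1)
    ((integrable_windowErr hmeas hinv r).const_mul r)
    (.of_forall fun ω => sum_indicator_badUp_inter_le (hSTO ω) r)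
  rw [hsum, integral_const_mul] at hle
  exact le_of_mul_le_mul_left hle (by exact_mod_cast hr)

theorem ae_notMem_badUp_inter (hmeas : Measurable T) (hSTO : ∀ ω, IsStrictTotalBool (T ω))
    (hinv : IsIInvariant P T) : ∀ᵐ ω ∂P, ∀ a b, 0 < a → a < b → T ω ∉ badUp 0 a ∩ badUp a b := by
  simp only [ae_all_iff, eventually_imp_distrib_left]
  intro a b ha hab
  exact ae_notMem_of_integral_indicator_eq_zero hmeas
    ((measurableSet_badUp 0 a).inter (measurableSet_badUp a b)) measurable_one
    (fun _ _ => one_pos) (.of_forall fun ω => (indicator_one_mem_Icc _ _).2)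
    ((integral_indicator_badUp_inter_eq hmeas hinv ha hab).trans
      (integral_indicator_badUp_inter_eq_zero hmeas hSTO hinv))

lemma integral_indicator_badUp_eq (hmeas : Measurable T) (hinv : IsIInvariant P T) {x y : ℤ}
    (hxy : x < y) :
    ∫ ω, (badUp x y).indicator (1 : BoolRel → ℝ) (T ω) ∂P =
      ∫ ω, (badUp 1 2).indicator (1 : BoolRel → ℝ) (T ω) ∂P :=
  integral_eq_of_equivariant₂ hmeas hinv (G := fun x y => (badUp x y).indicator 1)
    (measurable_one.indicator (measurableSet_badUp 1 2))
    (fun _ hf hbot htop _ hR x y => indicator_comap_of_mem_iff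
      (hR.comap_mem_badUp_iff hf hbot htop x y) rfl) hxy

lemma integral_indicator_badUp_eq_zero (hmeas : Measurable T)
    (hSTO : ∀ ω, IsStrictTotalBool (T ω)) (hinv : IsIInvariant P T) :
    ∫ ω, (badUp 1 2).indicator (1 : BoolRel → ℝ) (T ω) ∂P = 0 := by
  -- the averages of the indicators of `badUp 0 (j + 1)` have constant mean and vanish a.s.
  set A : ℕ → Ω → ℝ := fun N ω => avg (fun j => (badUp 0 (j + 1)).indicator 1 (T ω)) N
  have hmean : ∀ N, 1 ≤ N →
      ∫ ω, A N ω ∂P = ∫ ω, (badUp 1 2).indicator (1 : BoolRel → ℝ) (T ω) ∂P := by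
    intro N hN
    simp only [A, avg]
    rw [integral_const_mul,
      integral_finsetSum _ fun j _ => integrable_indicator_one hmeas (measurableSet_badUp _ _),
      sum_congr rfl fun (j : ℕ) _ => integral_indicator_badUp_eq hmeas hinv (by positivity),
      sum_const, card_range, nsmul_eq_mul, inv_mul_cancel_left₀ (by positivity)]
  have hlim : Tendsto (fun N => ∫ ω, A N ω ∂P) atTop (𝓝 0) := by
    simpa using tendsto_integral_of_dominated_convergence (F := A) (f := fun _ => (0 : ℝ))
      (fun _ => 1) (fun N => (measurable_avg (A := fun j ω => (badUp 0 (j + 1)).indicator 1 (T ω))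
        (fun _ => (measurable_one.indicator (measurableSet_badUp _ _)).comp hmeas)
          N).aestronglyMeasurable)
      (integrable_const 1)
      (fun N => .of_forall fun ω => by
        have := avg_mem_Icc (fun j => indicator_one_mem_Icc (badUp 0 (j + 1)) (T ω)) N
        rw [Real.norm_of_nonneg this.1]
        exact this.2)
      (by
        filter_upwards [ae_hasDensities hmeas hinv, ae_notMem_badUp_inter hmeas hSTO hinv]
          with ω hd hchain
        exact hd.tendsto_avg_indicator_badUp (hSTO ω) hchain)
  exact tendsto_nhds_unique (tendsto_const_nhds.congr' (eventually_atTop.2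
    ⟨1, fun N hN => (hmean N hN).symm⟩)) hlim

theorem ae_notMem_badUp (hmeas : Measurable T) (hSTO : ∀ ω, IsStrictTotalBool (T ω))
    (hinv : IsIInvariant P T) : ∀ᵐ ω ∂P, ∀ x y, x < y → T ω ∉ badUp x y := by
  simp only [ae_all_iff, eventually_imp_distrib_left]
  intro x y hxy
  exact ae_notMem_of_integral_indicator_eq_zero hmeas (measurableSet_badUp x y) measurable_one
    (fun _ _ => one_pos) (.of_forall fun ω => (indicator_one_mem_Icc _ _).2)
    ((integral_indicator_badUp_eq hmeas hinv hxy).trans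
      (integral_indicator_badUp_eq_zero hmeas hSTO hinv))

end BadEvents

end IInvariantOrder

open IInvariantOrder

/-- If `⊲` is a random strict total order on `ℤ` with law invariant under all strictly
increasing maps of `ℤ`, then a.s. for every `n` the limits
`X_n = lim (1/N) Σ_{k=-N}^{n} 1_{k ⊲ n}` and `Y_n = lim (1/N) Σ_{k=n}^{N} 1_{k ⊲ n}` exist,
and for all `m < n`, `m ⊲ n` iff `X_m < X_n`, or `Y_m < Y_n`, or
(`X_m = X_n` and `Y_m = Y_n` and `X_m > Y_m`). -/
theorem I_invariant_order_representation
    {Ω : Type*} [MeasurableSpace Ω] (P : Measure Ω) [IsProbabilityMeasure P]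
    (T : Ω → ℤ → ℤ → Bool) (hmeas : Measurable T)
    (hSTO : ∀ ω, IsStrictTotalBool (T ω))
    (hinv : ∀ f : ℤ → ℤ, StrictMono f →
      P.map (fun ω => fun m n => T ω (f m) (f n)) = P.map T) :
    ∀ᵐ ω ∂P, ∃ X Y : ℤ → ℝ,
      (∀ n : ℤ,
        Tendsto (fun N : ℕ => (N : ℝ)⁻¹ *
            ∑ k ∈ Finset.Icc (-(N:ℤ)) n, if T ω k n then (1:ℝ) else 0)
          atTop (nhds (X n)) ∧
        Tendsto (fun N : ℕ => (N : ℝ)⁻¹ *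
            ∑ k ∈ Finset.Icc n (N:ℤ), if T ω k n then (1:ℝ) else 0)
          atTop (nhds (Y n))) ∧
      ∀ m n : ℤ, m < n →
        (T ω m n = true ↔
          X m < X n ∨ Y m < Y n ∨ (X m = X n ∧ Y m = Y n ∧ Y m < X m)) := by
  filter_upwards [ae_hasDensities hmeas hinv, ae_notMem_badUp hmeas hSTO hinv,
    ae_notMem_badDown hmeas hSTO hinv] with ω hd hup hdown
  exact ⟨leftDensity (T ω), rightDensity (T ω),
    fun n => ⟨hd.tendsto_sum_Icc_left n, hd.tendsto_sum_Icc_right n⟩,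
    fun m n hmn => hd.rel_iff (hSTO ω) hmn (hup m n hmn) (hdown m n hmn)⟩
end

section
/- The measure λ on strict total orders of ℕ (with uniform finite restrictions) is invariant under the map induced by every bijection r : ℕ → ℕ, where the induced order is k ⊲̂ k′ iff r(k) ⊲ r(k′). Moreover λ is the unique probability measure on strict total orders of ℕ with this invariance property. -/
open MeasureTheory
open scoped ENNReal

/-- `R` restricted to the labels `{1, …, n}` is a strict total order. -/
def IsSTOupto (n : ℕ) (R : ℕ+ → ℕ+ → Bool) : Prop :=
  (∀ a : ℕ+, (a : ℕ) ≤ n → R a a = false) ∧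
  (∀ a b c : ℕ+, (a : ℕ) ≤ n → (b : ℕ) ≤ n → (c : ℕ) ≤ n →
    R a b = true → R b c = true → R a c = true) ∧
  (∀ a b : ℕ+, (a : ℕ) ≤ n → (b : ℕ) ≤ n → a ≠ b → R a b = !R b a)

/-- `R` is a strict total order on all of `ℕ`. -/
def IsSTO (R : ℕ+ → ℕ+ → Bool) : Prop :=
  (∀ a, R a a = false) ∧
  (∀ a b c, R a b = true → R b c = true → R a c = true) ∧
  (∀ a b, a ≠ b → R a b = !R b a)

/-- The cylinder event that the restriction of the order to `{1, …, n}` equals `ρ`. -/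
def cylinder (n : ℕ) (ρ : ℕ+ → ℕ+ → Bool) : Set (ℕ+ → ℕ+ → Bool) :=
  {R | ∀ m m' : ℕ+, (m : ℕ) ≤ n → (m' : ℕ) ≤ n → R m m' = ρ m m'}

/-- The relabelling map on orders induced by a bijection `r` of the labels:
`k ⊲̂ k'` iff `r k ⊲ r k'`. -/
def relabel (r : ℕ+ ≃ ℕ+) (R : ℕ+ → ℕ+ → Bool) : ℕ+ → ℕ+ → Bool :=
  fun k k' => R (r k) (r k')

/-!
The image of a measure under restriction to `{1, …, n}` is a measure on the finite set of
relations on `Fin n`, whose strict total orders are exactly the `n!` relations `σ i < σ j` with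
`σ : Perm (Fin n)`. Under `λ` these orders, each of mass `1 / n!`, already carry total mass `1`, so
every marginal of `λ` is uniform on orders; since marginals determine a finite measure on the
product space, `λ` is the only probability measure with this property. A relabelling acts on a
marginal through a permutation of some larger `Fin m`, and permutations preserve the uniform
marginal: hence `λ` is invariant. Conversely, an invariant measure concentrated on strict total
orders has marginals invariant under all permutations of `Fin n`, which act transitively on the
orders, so these marginals are uniform.
-/

open Function Set Equiv MeasurableSpace
open scoped Nat

lemma exists_equiv_fin_of_isStrictTotalOrder {α : Type*} [Fintype α] (r : α → α → Prop)
    [IsStrictTotalOrder α r] : ∃ e : α ≃ Fin (Fintype.card α), ∀ a b, r a b ↔ e a < e b := by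
  classical
  let := linearOrderOfSTO r
  exact ⟨(Fintype.orderIsoFinOfCardEq α rfl).symm.toEquiv,
    fun a b => (Fintype.orderIsoFinOfCardEq α rfl).symm.lt_iff_lt.symm⟩

namespace RandomOrder

def label {n : ℕ} (i : Fin n) : ℕ+ := Nat.succPNat i

lemma label_injective {n : ℕ} : Injective (label (n := n)) := fun _ _ h =>
  Fin.ext (Nat.succPNat_inj.mp h)

lemma label_le {n : ℕ} (i : Fin n) : (label i : ℕ) ≤ n := i.isLt

lemma exists_label_eq {n : ℕ} {a : ℕ+} (ha : (a : ℕ) ≤ n) : ∃ i : Fin n, label i = a :=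
  ⟨⟨a.natPred, by rw [← PNat.natPred_add_one a] at ha; omega⟩, a.succPNat_natPred⟩

def restrict (n : ℕ) (R : ℕ+ → ℕ+ → Bool) (i j : Fin n) : Bool := R (label i) (label j)

def pullback {m n : ℕ} (f : Fin n → Fin m) (g : Fin m → Fin m → Bool) (i j : Fin n) : Bool :=
  g (f i) (f j)

lemma pullback_castLE_comp_restrict {m n : ℕ} (h : n ≤ m) :
    pullback (Fin.castLE h) ∘ restrict m = restrict n := rfl

lemma restrict_surjective (n : ℕ) : Surjective (restrict n) := fun g =>
  ⟨extend label (fun i => extend label (g i) fun _ => false) fun _ _ => false,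
    funext₂ fun i j => by simp [restrict, label_injective.extend_apply]⟩

lemma cylinder_eq_preimage (n : ℕ) (ρ : ℕ+ → ℕ+ → Bool) :
    cylinder n ρ = restrict n ⁻¹' {restrict n ρ} := by
  ext R
  refine ⟨fun h => funext₂ fun i j => h _ _ (label_le i) (label_le j), fun h a b ha hb => ?_⟩
  obtain ⟨i, rfl⟩ := exists_label_eq ha
  obtain ⟨j, rfl⟩ := exists_label_eq hb
  exact congrFun₂ h i j

def permOrder {n : ℕ} (σ : Perm (Fin n)) (i j : Fin n) : Bool := decide (σ i < σ j)

@[simp] lemma permOrder_eq_true {n : ℕ} {σ : Perm (Fin n)} {i j : Fin n} :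
    permOrder σ i j = true ↔ σ i < σ j := decide_eq_true_iff

lemma permOrder_injective {n : ℕ} : Injective (permOrder (n := n)) := by
  intro σ τ h
  have hmono : StrictMono (σ.symm.trans τ) := fun a b hab => by
    simpa using (Bool.eq_iff_iff.mp (congrFun₂ h (σ.symm a) (σ.symm b))).mp (by simpa using hab)
  ext i
  simpa using
    (Fin.coe_orderIso_apply (hmono.orderIsoOfSurjective _ (Equiv.surjective _)) (σ i)).symm

lemma isStrictTotalOrder_iff_mem_range_permOrder {n : ℕ} {g : Fin n → Fin n → Bool} :
    IsStrictTotalOrder (Fin n) (fun i j => g i j) ↔ g ∈ range permOrder := by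
  constructor
  · intro hg
    obtain ⟨e, he⟩ := exists_equiv_fin_of_isStrictTotalOrder (fun i j => g i j)
    refine ⟨e.trans (finCongr (Fintype.card_fin n)), funext₂ fun i j => Bool.eq_iff_iff.mpr ?_⟩
    simpa using (he i j).symm
  · rintro ⟨σ, rfl⟩
    exact { irrefl := by simp, trans := by simpa using fun _ _ _ => lt_trans,
            trichotomous := fun i j => by simpa using fun h h' => σ.injective (le_antisymm h' h) }

lemma isSTOupto_iff {n : ℕ} {ρ : ℕ+ → ℕ+ → Bool} :
    IsSTOupto n ρ ↔ IsStrictTotalOrder (Fin n) (fun i j => restrict n ρ i j) := by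
  constructor
  · rintro ⟨hirrefl, htrans, htotal⟩
    exact
      { irrefl := fun i => by simp [restrict, hirrefl _ (label_le i)]
        trans := fun i j k => htrans _ _ _ (label_le i) (label_le j) (label_le k)
        trichotomous := fun i j hij hji => by
          by_contra hne
          have := htotal _ _ (label_le i) (label_le j) (label_injective.ne hne)
          simp_all [restrict] }
  · intro h
    refine ⟨fun a ha => ?_, fun a b c ha hb hc => ?_, fun a b ha hb hab => ?_⟩
    · obtain ⟨i, rfl⟩ := exists_label_eq ha
      simpa [restrict] using Std.Irrefl.irrefl (r := fun i j => restrict n ρ i j) i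
    · obtain ⟨i, rfl⟩ := exists_label_eq ha
      obtain ⟨j, rfl⟩ := exists_label_eq hb
      obtain ⟨k, rfl⟩ := exists_label_eq hc
      exact IsTrans.trans (r := fun i j => restrict n ρ i j) i j k
    · obtain ⟨i, rfl⟩ := exists_label_eq ha
      obtain ⟨j, rfl⟩ := exists_label_eq hb
      have htri := Std.Trichotomous.trichotomous (r := fun i j => restrict n ρ i j) i j
      have hasymm := asymm_of (fun i j => restrict n ρ i j) (a := i) (b := j)
      cases hij : ρ (label i) (label j) <;> cases hji : ρ (label j) (label i) <;>
        simp_all [restrict]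

lemma isSTOupto_iff_restrict_mem_range {n : ℕ} {ρ : ℕ+ → ℕ+ → Bool} :
    IsSTOupto n ρ ↔ restrict n ρ ∈ range permOrder :=
  isSTOupto_iff.trans isStrictTotalOrder_iff_mem_range_permOrder

lemma IsSTO.isSTOupto {R : ℕ+ → ℕ+ → Bool} (h : IsSTO R) (n : ℕ) : IsSTOupto n R :=
  ⟨fun a _ => h.1 a, fun a b c _ _ _ => h.2.1 a b c, fun a b _ _ => h.2.2 a b⟩

lemma pullback_permOrder {n : ℕ} (δ σ : Perm (Fin n)) :
    pullback δ (permOrder σ) = permOrder (σ * δ) := rfl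

lemma pullback_pullback_inv {n : ℕ} (δ : Perm (Fin n)) (g : Fin n → Fin n → Bool) :
    pullback δ (pullback ⇑δ⁻¹ g) = g :=
  funext₂ fun i j => by simp [pullback]

lemma pullback_inv_pullback {n : ℕ} (δ : Perm (Fin n)) (g : Fin n → Fin n → Bool) :
    pullback ⇑δ⁻¹ (pullback δ g) = g :=
  funext₂ fun i j => by simp [pullback]

lemma preimage_pullback_singleton {n : ℕ} (δ : Perm (Fin n)) (g : Fin n → Fin n → Bool) :
    pullback δ ⁻¹' {g} = {pullback ⇑δ⁻¹ g} := by
  ext h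
  simp only [mem_preimage, mem_singleton_iff]
  constructor
  · rintro rfl
    exact (pullback_inv_pullback δ h).symm
  · rintro rfl
    exact pullback_pullback_inv δ g

lemma pullback_mem_range_permOrder_iff {n : ℕ} (δ : Perm (Fin n)) {g : Fin n → Fin n → Bool} :
    pullback δ g ∈ range permOrder ↔ g ∈ range permOrder := by
  refine ⟨fun ⟨σ, hσ⟩ => ⟨σ * δ⁻¹, ?_⟩, fun ⟨σ, hσ⟩ => ⟨σ * δ, hσ ▸ rfl⟩⟩
  rw [← pullback_permOrder, hσ, pullback_inv_pullback]

lemma exists_relabel_restrict_eq_pullback {n : ℕ} (δ : Perm (Fin n)) :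
    ∃ r : ℕ+ ≃ ℕ+, restrict n ∘ relabel r = pullback δ ∘ restrict n := by
  obtain ⟨r, hr⟩ := Perm.exists_extending_pair label (label ∘ δ) label_injective
    (label_injective.comp δ.injective)
  exact ⟨r, funext fun R => funext₂ fun i j => by simp [restrict, relabel, pullback, hr]⟩

lemma exists_restrict_relabel_eq_pullback (r : ℕ+ ≃ ℕ+) (n : ℕ) :
    ∃ m, ∃ h : n ≤ m, ∃ δ : Perm (Fin m),
      restrict n ∘ relabel r = pullback (Fin.castLE h) ∘ pullback δ ∘ restrict m := by
  obtain ⟨M, hM⟩ := Finite.exists_le fun i : Fin n => (r (label i) : ℕ)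
  obtain ⟨f, hf⟩ : ∃ f : Fin n → Fin (max n M), ∀ i, label (f i) = r (label i) :=
    ⟨fun i => ⟨(r (label i)).natPred, by have := hM i; rw [← PNat.natPred_add_one] at this; omega⟩,
      fun i => PNat.succPNat_natPred _⟩
  have hf_inj : Injective f := fun i j hij =>
    label_injective (r.injective (by rw [← hf, ← hf, hij]))
  obtain ⟨δ, hδ⟩ := Perm.exists_extending_pair _ f (Fin.castLE_injective (le_max_left n M)) hf_inj
  exact ⟨max n M, le_max_left n M, δ,
    funext fun R => funext₂ fun i j => by simp [restrict, relabel, pullback, hδ, hf]⟩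

lemma measurable_restrict (n : ℕ) : Measurable (restrict n) := by
  unfold restrict; fun_prop

lemma measurable_relabel (r : ℕ+ ≃ ℕ+) : Measurable (relabel r) := by
  unfold relabel; fun_prop

def restrictPreimages : Set (Set (ℕ+ → ℕ+ → Bool)) := {s | ∃ n A, restrict n ⁻¹' A = s}

lemma generateFrom_restrictPreimages :
    generateFrom restrictPreimages = (inferInstance : MeasurableSpace (ℕ+ → ℕ+ → Bool)) := by
  refine le_antisymm (generateFrom_le ?_) ?_
  · rintro _ ⟨n, A, rfl⟩
    exact measurable_restrict n .of_discrete
  · have hrestrict (m : ℕ) : Measurable[generateFrom restrictPreimages] (restrict m) :=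
      fun A _ => measurableSet_generateFrom ⟨m, A, rfl⟩
    have hid : Measurable[generateFrom restrictPreimages] (id : (ℕ+ → ℕ+ → Bool) → _) := by
      refine (@measurable_pi_iff _ _ _ (_) _ _).mpr fun a =>
        (@measurable_pi_iff _ _ _ (_) _ _).mpr fun b => ?_
      obtain ⟨i, hi⟩ := exists_label_eq (le_max_left (a : ℕ) b)
      obtain ⟨j, hj⟩ := exists_label_eq (le_max_right (a : ℕ) b)
      have : (fun R : ℕ+ → ℕ+ → Bool => R a b) = (fun g => g i j) ∘ restrict _ := by
        funext R; simp [restrict, hi, hj]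
      exact this ▸ (measurable_pi_apply j).comp ((measurable_pi_apply i).comp (hrestrict _))
    exact fun s hs => hid hs

lemma isPiSystem_restrictPreimages : IsPiSystem restrictPreimages := by
  rintro _ ⟨n, A, rfl⟩ _ ⟨m, B, rfl⟩ -
  refine ⟨max n m, pullback (Fin.castLE (le_max_left n m)) ⁻¹' A ∩
    pullback (Fin.castLE (le_max_right n m)) ⁻¹' B, ?_⟩
  rw [preimage_inter, ← preimage_comp, ← preimage_comp, pullback_castLE_comp_restrict,
    pullback_castLE_comp_restrict]

lemma ext_of_map_restrict {μ ν : Measure (ℕ+ → ℕ+ → Bool)} [IsFiniteMeasure μ]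
    (h : ∀ n, μ.map (restrict n) = ν.map (restrict n)) : μ = ν := by
  have hC : ∀ n A, μ (restrict n ⁻¹' A) = ν (restrict n ⁻¹' A) := fun n A => by
    rw [← Measure.map_apply (measurable_restrict n) .of_discrete, h,
      Measure.map_apply (measurable_restrict n) .of_discrete]
  refine ext_of_generate_finite _ generateFrom_restrictPreimages.symm isPiSystem_restrictPreimages
    ?_ (hC 0 univ)
  rintro _ ⟨n, A, rfl⟩
  exact hC n A

lemma measure_range_permOrder {n : ℕ} (ν : Measure (Fin n → Fin n → Bool)) :
    ν (range permOrder) = ∑ σ, ν {permOrder σ} := by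
  rw [← iUnion_singleton_eq_range, measure_iUnion
    (fun σ τ h => disjoint_singleton.mpr (permOrder_injective.ne h)) fun _ => .singleton _,
    tsum_fintype]

lemma sum_perm_fin_const {n : ℕ} (c : ℝ≥0∞) : ∑ _σ : Perm (Fin n), c = n ! * c := by
  simp [Finset.card_univ, Fintype.card_perm]

def IsUniformOnOrders (μ : Measure (ℕ+ → ℕ+ → Bool)) : Prop :=
  ∀ (n : ℕ) (ρ : ℕ+ → ℕ+ → Bool), IsSTOupto n ρ → μ (cylinder n ρ) = (n ! : ℝ≥0∞)⁻¹

namespace IsUniformOnOrders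

variable {μ : Measure (ℕ+ → ℕ+ → Bool)} [IsProbabilityMeasure μ]

lemma map_restrict_apply_singleton (hμ : IsUniformOnOrders μ) {n : ℕ} (g : Fin n → Fin n → Bool) :
    μ.map (restrict n) {g} = if g ∈ range permOrder then (n ! : ℝ≥0∞)⁻¹ else 0 := by
  have h_orders (σ : Perm (Fin n)) : μ.map (restrict n) {permOrder σ} = (n ! : ℝ≥0∞)⁻¹ := by
    obtain ⟨ρ, hρ⟩ := restrict_surjective n (permOrder σ)
    rw [Measure.map_apply (measurable_restrict n) (.singleton _), ← hρ, ← cylinder_eq_preimage]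
    exact hμ n ρ (isSTOupto_iff_restrict_mem_range.mpr ⟨σ, hρ.symm⟩)
  split_ifs with hg
  · obtain ⟨σ, rfl⟩ := hg
    exact h_orders σ
  · have := Measure.isProbabilityMeasure_map (μ := μ) (measurable_restrict n).aemeasurable
    have : μ.map (restrict n) (range permOrder) = 1 := by
      rw [measure_range_permOrder, Finset.sum_congr rfl fun σ _ => h_orders σ, sum_perm_fin_const,
        ENNReal.mul_inv_cancel (by exact_mod_cast n.factorial_ne_zero) (ENNReal.natCast_ne_top _)]
    exact measure_mono_null (singleton_subset_iff.mpr hg)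
      ((prob_compl_eq_zero_iff .of_discrete).mpr this)

lemma ext (hμ : IsUniformOnOrders μ) {ν : Measure (ℕ+ → ℕ+ → Bool)} [IsProbabilityMeasure ν]
    (hν : IsUniformOnOrders ν) : μ = ν :=
  ext_of_map_restrict fun _ => Measure.ext_iff_singleton.mpr fun g => by
    rw [hμ.map_restrict_apply_singleton, hν.map_restrict_apply_singleton]

lemma map_pullback_perm (hμ : IsUniformOnOrders μ) {n : ℕ} (δ : Perm (Fin n)) :
    (μ.map (restrict n)).map (pullback δ) = μ.map (restrict n) :=
  Measure.ext_iff_singleton.mpr fun g => by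
    rw [Measure.map_apply .of_discrete (.singleton g), preimage_pullback_singleton,
      hμ.map_restrict_apply_singleton, hμ.map_restrict_apply_singleton]
    simp only [pullback_mem_range_permOrder_iff]

lemma map_relabel (hμ : IsUniformOnOrders μ) (r : ℕ+ ≃ ℕ+) : μ.map (relabel r) = μ := by
  have := Measure.isProbabilityMeasure_map (μ := μ) (measurable_relabel r).aemeasurable
  refine ext_of_map_restrict fun n => ?_
  obtain ⟨m, h, δ, hr⟩ := exists_restrict_relabel_eq_pullback r n
  calc (μ.map (relabel r)).map (restrict n)
      = ((μ.map (restrict m)).map (pullback δ)).map (pullback (Fin.castLE h)) := by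
        rw [Measure.map_map (measurable_restrict n) (measurable_relabel r), hr,
          Measure.map_map .of_discrete .of_discrete,
          Measure.map_map .of_discrete (measurable_restrict m)]
        rfl
    _ = μ.map (restrict n) := by
        rw [hμ.map_pullback_perm, Measure.map_map .of_discrete (measurable_restrict m),
          pullback_castLE_comp_restrict]

end IsUniformOnOrders

lemma isUniformOnOrders_of_map_relabel {P : Measure (ℕ+ → ℕ+ → Bool)} [IsProbabilityMeasure P]
    (hSTO : P {R | IsSTO R} = 1) (hinv : ∀ r : ℕ+ ≃ ℕ+, P.map (relabel r) = P) :
    IsUniformOnOrders P := by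
  intro n ρ hρ
  obtain ⟨σ, hσ⟩ := isSTOupto_iff_restrict_mem_range.mp hρ
  set ν := P.map (restrict n)
  have hν_perm (δ : Perm (Fin n)) : ν.map (pullback δ) = ν := by
    obtain ⟨r, hr⟩ := exists_relabel_restrict_eq_pullback δ
    rw [Measure.map_map .of_discrete (measurable_restrict n), ← hr,
      ← Measure.map_map (measurable_restrict n) (measurable_relabel r), hinv]
  have hconst (τ : Perm (Fin n)) : ν {permOrder τ} = ν {permOrder 1} := by
    conv_lhs => rw [← hν_perm τ]
    rw [Measure.map_apply .of_discrete (.singleton _), preimage_pullback_singleton,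
      pullback_permOrder, mul_inv_cancel]
  have hone : ν (range permOrder) = 1 := by
    refine le_antisymm prob_le_one (hSTO ▸ ?_)
    rw [Measure.map_apply (measurable_restrict n) .of_discrete]
    exact measure_mono fun R hR => isSTOupto_iff_restrict_mem_range.mp (IsSTO.isSTOupto hR n)
  rw [measure_range_permOrder, Finset.sum_congr rfl fun τ _ => hconst τ, sum_perm_fin_const] at hone
  rw [cylinder_eq_preimage, ← Measure.map_apply (measurable_restrict n) (.singleton _), ← hσ,
    hconst]
  exact ENNReal.eq_inv_of_mul_eq_one_left (mul_comm (n ! : ℝ≥0∞) _ ▸ hone)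

end RandomOrder

/-- The measure `λ` on strict total orders of `ℕ` with uniform finite restrictions is invariant
under the map induced by every bijection `r` of the labels, and it is the unique probability
measure concentrated on strict total orders with this invariance property. -/
theorem lambda_relabelling_invariant_and_unique
    (lam : Measure (ℕ+ → ℕ+ → Bool)) (hlam : IsProbabilityMeasure lam)
    (huniform : ∀ (n : ℕ) (ρ : ℕ+ → ℕ+ → Bool), IsSTOupto n ρ →
      lam (cylinder n ρ) = ((Nat.factorial n : ℝ≥0∞))⁻¹) :
    (∀ r : ℕ+ ≃ ℕ+, lam.map (relabel r) = lam) ∧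
      ∀ P : Measure (ℕ+ → ℕ+ → Bool), IsProbabilityMeasure P →
        P {R | IsSTO R} = 1 →
        (∀ r : ℕ+ ≃ ℕ+, P.map (relabel r) = P) → P = lam :=
  ⟨RandomOrder.IsUniformOnOrders.map_relabel huniform, fun _ _ hSTO hinv =>
    (RandomOrder.isUniformOnOrders_of_map_relabel hSTO hinv).ext huniform⟩
end
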